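/- arXiv:math/0608123 — 4 statements merged into one kernel-verified Lean document; each statement's English description precedes it below -/
import Mathlib

section
/- Let E be a full heap over A, where P is finite and A is of affine type, and fix t in Z. Then the action of the subgroup W_0 preserves the set B_t of proper ideals of height t, and W_0 acts transitively on B_t: for all F, F' in B_t there exists w in W_0 with w · F = F'. -/
/-!
Each `s_p` with `p ≠ p0` only moves elements labelled `p`, so it preserves the height.
Conversely, two proper ideals `F`, `F'` of the same height contain the same elements labelled
`p0`, and their symmetric difference is finite. Adding a minimal element `a` of `F' \ F` to `F`,
or removing a maximal element `a` of `F \ F'` from `F`, is the action of `s_{eps a}`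
(comparability makes `a` the only candidate of its label, and the heap condition on intervals
forbids that one element of a label be removable while another is addable), and it shrinks the
symmetric difference by one; induction on its size gives transitivity.
-/

/-- Two vertices of the Dynkin diagram are adjacent if they are distinct
and the corresponding entry of the generalized Cartan matrix is nonzero. -/
def Adj {P : Type*} (A : P → P → ℤ) (p q : P) : Prop := p ≠ q ∧ A p q ≠ 0

/-- A generalized Cartan matrix with all entries in {2, 0, -1, -2}. -/
def IsGCM {P : Type*} (A : P → P → ℤ) : Prop :=
  (∀ p, A p p = 2) ∧ (∀ p q, p ≠ q → A p q ≤ 0) ∧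
  (∀ p q, (A p q = 0 ↔ A q p = 0)) ∧
  (∀ p q, A p q = 2 ∨ A p q = 0 ∨ A p q = -1 ∨ A p q = -2)

/-- An ideal (downward-closed subset) of a partially ordered set. -/
def IsIdeal {E : Type*} [PartialOrder E] (F : Set E) : Prop :=
  ∀ ⦃x : E⦄, x ∈ F → ∀ ⦃y : E⦄, y ≤ x → y ∈ F

/-- A proper ideal: an ideal meeting each fibre `eps ⁻¹ {p}` in a nonempty
proper subset. -/
def IsProperIdeal {P E : Type*} [PartialOrder E] (eps : E → P) (F : Set E) : Prop :=
  IsIdeal F ∧ ∀ p : P, (∃ a, eps a = p ∧ a ∈ F) ∧ (∃ a, eps a = p ∧ a ∉ F)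

/-- A full heap over the generalized Cartan matrix `A` with labelling map `eps`.
Local finiteness is expressed by the `LocallyFiniteOrder` instance. -/
structure IsFullHeap {P E : Type*} [PartialOrder E] [LocallyFiniteOrder E]
    (A : P → P → ℤ) (eps : E → P) : Prop where
  /-- elements with equal or adjacent labels are comparable -/
  comparable : ∀ a b : E, (eps a = eps b ∨ Adj A (eps a) (eps b)) → a ≤ b ∨ b ≤ a
  /-- the order is the reflexive-transitive closure of its restriction to
  pairs with equal or adjacent labels -/
  le_generated : ∀ a b : E, a ≤ b ↔
    Relation.ReflTransGen (fun x y : E => x ≤ y ∧ (eps x = eps y ∨ Adj A (eps x) (eps y))) a b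
  /-- each fibre is unbounded above in E -/
  unbounded_above : ∀ (p : P) (a : E), ∃ b, eps b = p ∧ ¬ b ≤ a
  /-- each fibre is unbounded below in E -/
  unbounded_below : ∀ (p : P) (a : E), ∃ b, eps b = p ∧ ¬ a ≤ b
  /-- covering elements with adjacent labels exist -/
  covers : ∀ p p' : P, Adj A p p' → ∀ a : E, eps a = p →
    ∃ b, eps b = p' ∧ (a ⋖ b ∨ b ⋖ a)
  /-- the defining condition on open intervals between consecutive elements
  of a fibre -/
  interval : ∀ a b : E, a < b → eps a = eps b →
    (∀ c, a < c → c < b → eps c ≠ eps a) →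
    (∑ c ∈ Finset.Ioo a b, A (eps a) (eps c)) = -2

/-- The character of a pair of proper ideals:
`chi(F, F')(p) = |(F' \ F) ∩ eps⁻¹(p)| - |(F \ F') ∩ eps⁻¹(p)|`. -/
noncomputable def chiFn {P E : Type*} (eps : E → P) (F F' : Set E) : P → ℤ :=
  fun p => (((F' \ F) ∩ eps ⁻¹' {p}).ncard : ℤ) - (((F \ F') ∩ eps ⁻¹' {p}).ncard : ℤ)

open Classical in
/-- The operator `S_p` on ideals: remove the (unique) element of label `p`
that can be removed, else add the (unique) element of label `p` that can be
added, else do nothing. -/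
noncomputable def Sact {P E : Type*} [PartialOrder E] (eps : E → P) (p : P) (I : Set E) :
    Set E :=
  if h : ∃ a, a ∈ I ∧ eps a = p ∧ IsIdeal (I \ {a}) then I \ {h.choose}
  else if h' : ∃ a, a ∉ I ∧ eps a = p ∧ IsIdeal (I ∪ {a}) then I ∪ {h'.choose}
  else I

/-- The defining relations of the Weyl group of a (doubly laced)
generalized Cartan matrix. -/
def weylRels {P : Type*} (A : P → P → ℤ) : Set (FreeGroup P) :=
  {r | (∃ p, r = FreeGroup.of p ^ 2) ∨
       (∃ p q, A p q = 0 ∧ r = (FreeGroup.of p * FreeGroup.of q) ^ 2) ∨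
       (∃ p q, A p q * A q p = 1 ∧ r = (FreeGroup.of p * FreeGroup.of q) ^ 3) ∨
       (∃ p q, A p q * A q p = 2 ∧ r = (FreeGroup.of p * FreeGroup.of q) ^ 4)}

/-- The Weyl group of a generalized Cartan matrix, as a presented group. -/
abbrev WeylGroup {P : Type*} (A : P → P → ℤ) := PresentedGroup (weylRels A)

/-- The reflection `s_p` in the reflection representation on `ℤ^P`:
`s_p(v) = v - (∑ q, a_{pq} v_q) e_p`. -/
def reflAct {P : Type*} [Fintype P] [DecidableEq P] (A : P → P → ℤ) (p : P) (v : P → ℤ) :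
    P → ℤ :=
  fun r => if r = p then v p - ∑ q, A p q * v q else v r

/-- `A` is of affine type: indecomposable, and `A δ = 0` for some positive
integer vector `δ`. -/
def IsAffine {P : Type*} [Fintype P] (A : P → P → ℤ) : Prop :=
  (∀ p q : P, Relation.ReflTransGen (Adj A) p q) ∧
  ∃ δ : P → ℤ, (∀ p, 0 < δ p) ∧ ∀ p, (∑ q, A p q * δ q) = 0

open scoped symmDiff

/-- For an ideal `F`, and `e0` enumerating the chain `eps⁻¹(p0)` in order, this says
`h(F) = t`. -/
def HasHeight {E : Type*} (e0 : ℤ → E) (t : ℤ) (F : Set E) : Prop :=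
  e0 t ∈ F ∧ e0 (t + 1) ∉ F

section Ideals

variable {P E : Type*} [PartialOrder E] {eps : E → P} {p p0 : P} {e0 : ℤ → E} {s t : ℤ}
  {I F F' : Set E} {a x : E}

lemma IsIdeal.union_singleton_of_minimal (hF : IsIdeal F) (hF' : IsIdeal F')
    (ha : Minimal (· ∈ F' \ F) a) : IsIdeal (F ∪ {a}) := by
  rintro x (hx | rfl) y hy
  · exact Or.inl (hF hx hy)
  · by_contra hy'
    simp only [Set.mem_union, Set.mem_singleton_iff, not_or] at hy'
    exact hy'.2 (ha.eq_of_le ⟨hF' ha.prop.1 hy, hy'.1⟩ hy)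

lemma IsIdeal.diff_singleton_of_maximal (hF : IsIdeal F) (hF' : IsIdeal F')
    (ha : Maximal (· ∈ F \ F') a) : IsIdeal (F \ {a}) := by
  rintro x ⟨hxF, hxa⟩ y hy
  refine ⟨hF hxF hy, ?_⟩
  rintro rfl
  exact hxa (ha.eq_of_ge ⟨hxF, fun hxF' => ha.prop.2 (hF' hxF' hy)⟩ hy)

lemma HasHeight.mem_iff (hmono : Monotone e0) (hF : IsIdeal F)
    (h : HasHeight e0 t F) : e0 s ∈ F ↔ s ≤ t := by
  refine ⟨fun hs => ?_, fun hst => hF h.1 (hmono hst)⟩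
  by_contra! hts
  exact h.2 (hF hs (hmono (by omega)))

lemma label_ne_of_mem_symmDiff (hmono : Monotone e0) (he0surj : ∀ a : E, eps a = p0 → ∃ s : ℤ, e0 s = a)
    (hF : IsIdeal F) (hF' : IsIdeal F') (hFt : HasHeight e0 t F) (hF't : HasHeight e0 t F')
    (ha : a ∈ F ∆ F') : eps a ≠ p0 := by
  intro hlab
  obtain ⟨s, rfl⟩ := he0surj a hlab
  have hsame : e0 s ∈ F ↔ e0 s ∈ F' := (hFt.mem_iff hmono hF).trans (hF't.mem_iff hmono hF').symm
  rw [Set.mem_symmDiff] at ha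
  tauto

lemma mem_Sact_iff_of_ne (hx : eps x ≠ p) :
    x ∈ Sact eps p I ↔ x ∈ I := by
  unfold Sact
  split_ifs with hrem hadd
  · exact ⟨fun h => h.1, fun h => ⟨h, fun hxa => hx (hxa ▸ hrem.choose_spec.2.1)⟩⟩
  · exact ⟨fun h => h.resolve_right fun hxa => hx (hxa ▸ hadd.choose_spec.2.1), Or.inl⟩
  · rfl

lemma hasHeight_Sact_iff (he0lab : ∀ s : ℤ, eps (e0 s) = p0) (hp : p ≠ p0) :
    HasHeight e0 t (Sact eps p I) ↔ HasHeight e0 t I := by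
  have hfix : ∀ s, e0 s ∈ Sact eps p I ↔ e0 s ∈ I :=
    fun s => mem_Sact_iff_of_ne (by rw [he0lab]; exact hp.symm)
  simp only [HasHeight, hfix]

end Ideals

namespace IsFullHeap

variable {P E : Type*} [PartialOrder E] [LocallyFiniteOrder E] {A : P → P → ℤ} {eps : E → P}
  {I : Set E} {a b : E}

lemma eq_of_removable (hE : IsFullHeap A eps) (haI : a ∈ I) (hra : IsIdeal (I \ {a}))
    (hbI : b ∈ I) (hrb : IsIdeal (I \ {b})) (hlab : eps a = eps b) : a = b := by
  by_contra hne
  rcases hE.comparable a b (Or.inl hlab) with h | h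
  · exact (hra (show b ∈ I \ {a} from ⟨hbI, Ne.symm hne⟩) h).2 rfl
  · exact (hrb (show a ∈ I \ {b} from ⟨haI, hne⟩) h).2 rfl

lemma eq_of_addable (hE : IsFullHeap A eps) (haI : a ∉ I) (hra : IsIdeal (I ∪ {a}))
    (hbI : b ∉ I) (hrb : IsIdeal (I ∪ {b})) (hlab : eps a = eps b) : a = b := by
  rcases hE.comparable a b (Or.inl hlab) with h | h
  · exact (hrb (Or.inr rfl) h).resolve_left haI
  · exact ((hra (Or.inr rfl) h).resolve_left hbI).symm

/-- If `b` could be removed and `a` added, of the same label, then `a` would cover `b`: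
the empty sum over `(b, a)` contradicts the heap condition on intervals. -/
lemma not_removable_of_addable (hE : IsFullHeap A eps) (hI : IsIdeal I)
    (haI : a ∉ I) (hadd : IsIdeal (I ∪ {a})) (hbI : b ∈ I) (hrem : IsIdeal (I \ {b}))
    (hlab : eps b = eps a) : False := by
  have hba : b < a := by
    rcases hE.comparable b a (Or.inl hlab) with h | h
    · exact lt_of_le_of_ne h fun he => haI (he ▸ hbI)
    · exact absurd (hI hbI h) haI
  have hgap : ∀ c, b < c → c < a → False := fun c hbc hca =>
    have hcI : c ∈ I := (hadd (Or.inr rfl) hca.le).resolve_right hca.ne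
    (hrem ⟨hcI, hbc.ne'⟩ hbc.le).2 rfl
  have hsum := hE.interval b a hba hlab fun c h₁ h₂ => (hgap c h₁ h₂).elim
  have hempty : Finset.Ioo b a = ∅ := Finset.eq_empty_of_forall_notMem fun c hc =>
    hgap c (Finset.mem_Ioo.mp hc).1 (Finset.mem_Ioo.mp hc).2
  rw [hempty, Finset.sum_empty] at hsum
  exact absurd hsum (by norm_num)

lemma Sact_of_addable (hE : IsFullHeap A eps) (hI : IsIdeal I) (haI : a ∉ I)
    (hadd : IsIdeal (I ∪ {a})) : Sact eps (eps a) I = I ∪ {a} := by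
  have hno : ¬ ∃ b, b ∈ I ∧ eps b = eps a ∧ IsIdeal (I \ {b}) := fun ⟨b, hbI, hlab, hrem⟩ =>
    hE.not_removable_of_addable hI haI hadd hbI hrem hlab
  have hyes : ∃ c, c ∉ I ∧ eps c = eps a ∧ IsIdeal (I ∪ {c}) := ⟨a, haI, rfl, hadd⟩
  have hc := hyes.choose_spec
  rw [Sact, dif_neg hno, dif_pos hyes, hE.eq_of_addable hc.1 hc.2.2 haI hadd hc.2.1]

lemma Sact_of_removable (hE : IsFullHeap A eps) (haI : a ∈ I) (hrem : IsIdeal (I \ {a})) :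
    Sact eps (eps a) I = I \ {a} := by
  have hyes : ∃ b, b ∈ I ∧ eps b = eps a ∧ IsIdeal (I \ {b}) := ⟨a, haI, rfl, hrem⟩
  have hc := hyes.choose_spec
  rw [Sact, dif_pos hyes, hE.eq_of_removable hc.1 hc.2.2 haI hrem hc.2.1]

lemma finite_diff [Finite P] (hE : IsFullHeap A eps) {F F' : Set E}
    (hF : IsProperIdeal eps F) (hF' : IsProperIdeal eps F') : (F \ F').Finite := by
  have hcover : F \ F' ⊆ ⋃ p, (F \ F') ∩ eps ⁻¹' {p} :=
    fun x hx => Set.mem_iUnion.mpr ⟨eps x, hx, rfl⟩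
  refine (Set.finite_iUnion fun p => ?_).subset hcover
  obtain ⟨b, hb, hbF'⟩ := (hF'.2 p).1
  obtain ⟨c, hc, hcF⟩ := (hF.2 p).2
  refine (Set.finite_Icc b c).subset ?_
  rintro x ⟨⟨hxF, hxF'⟩, rfl : eps x = p⟩
  refine ⟨?_, ?_⟩
  · exact (hE.comparable x b (Or.inl hb.symm)).resolve_left fun h => hxF' (hF'.1 hbF' h)
  · exact (hE.comparable x c (Or.inl hc.symm)).resolve_right fun h => hcF (hF.1 hxF h)

lemma finite_symmDiff [Finite P] (hE : IsFullHeap A eps) {F F' : Set E}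
    (hF : IsProperIdeal eps F) (hF' : IsProperIdeal eps F') : (F ∆ F').Finite :=
  (hE.finite_diff hF hF').union (hE.finite_diff hF' hF)

/-- Add a minimal element of `F' \ F`, or else remove a maximal element of `F \ F'`. -/
lemma exists_Sact_eq_symmDiff [Finite P] (hE : IsFullHeap A eps) {F F' : Set E}
    (hF : IsProperIdeal eps F) (hF' : IsProperIdeal eps F') (hne : F ≠ F') :
    ∃ a ∈ F ∆ F', Sact eps (eps a) F = F ∆ {a} := by
  by_cases hnew : (F' \ F).Nonempty
  · obtain ⟨a, ha⟩ := (hE.finite_diff hF' hF).exists_minimal hnew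
    refine ⟨a, Or.inr ha.prop, ?_⟩
    rw [hE.Sact_of_addable hF.1 ha.prop.2 (hF.1.union_singleton_of_minimal hF'.1 ha),
      (Set.disjoint_singleton_right.mpr ha.prop.2).symmDiff_eq_sup]
    rfl
  · rw [Set.not_nonempty_iff_eq_empty, Set.sdiff_eq_empty] at hnew
    obtain ⟨a, ha⟩ := (hE.finite_diff hF hF').exists_maximal
      (Set.nonempty_of_not_subset fun h => hne (h.antisymm hnew))
    refine ⟨a, Or.inl ha.prop, ?_⟩
    rw [hE.Sact_of_removable ha.prop.1 (hF.1.diff_singleton_of_maximal hF'.1 ha),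
      symmDiff_of_ge (Set.singleton_subset_iff.mpr ha.prop.1)]

end IsFullHeap

namespace WeylGroup

variable {P : Type*} (A : P → P → ℤ)

lemma of_inv (p : P) : (PresentedGroup.of p : WeylGroup A)⁻¹ = PresentedGroup.of p := by
  have hsq := PresentedGroup.one_of_mem (rels := weylRels A) (Or.inl ⟨p, rfl⟩)
  rw [map_pow, pow_two] at hsq
  exact inv_eq_of_mul_eq_one_right hsq

def W₀ (p0 : P) : Subgroup (WeylGroup A) :=
  Subgroup.closure {w | ∃ p : P, p ≠ p0 ∧ w = PresentedGroup.of p}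

end WeylGroup

section Action

variable {P E : Type*} [PartialOrder E] {A : P → P → ℤ} {eps : E → P} {p0 : P} {e0 : ℤ → E}
  {t : ℤ} {act : WeylGroup A →* Equiv.Perm {I : Set E // IsProperIdeal eps I}}

lemma hasHeight_act_of_mem_W₀ (he0lab : ∀ s : ℤ, eps (e0 s) = p0)
    (hact : ∀ (p : P) (I : {I : Set E // IsProperIdeal eps I}),
      (act (PresentedGroup.of p) I).val = Sact eps p I.val)
    {w : WeylGroup A} (hw : w ∈ WeylGroup.W₀ A p0) {F : {I : Set E // IsProperIdeal eps I}}
    (hF : HasHeight e0 t F.val) : HasHeight e0 t (act w F).val := by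
  induction hw using Subgroup.closure_induction'' generalizing F with
  | mem x hx =>
    obtain ⟨p, hp, rfl⟩ := hx
    rwa [hact, hasHeight_Sact_iff he0lab hp]
  | inv_mem x hx =>
    obtain ⟨p, hp, rfl⟩ := hx
    rwa [WeylGroup.of_inv, hact, hasHeight_Sact_iff he0lab hp]
  | one => simpa using hF
  | mul x y _ _ hx hy =>
    rw [map_mul, Equiv.Perm.mul_apply]
    exact hx (hy hF)

lemma exists_mem_W₀_act_eq [Finite P] [LocallyFiniteOrder E] (hE : IsFullHeap A eps)
    (hmono : Monotone e0) (he0lab : ∀ s : ℤ, eps (e0 s) = p0)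
    (he0surj : ∀ a : E, eps a = p0 → ∃ s : ℤ, e0 s = a)
    (hact : ∀ (p : P) (I : {I : Set E // IsProperIdeal eps I}),
      (act (PresentedGroup.of p) I).val = Sact eps p I.val)
    (F F' : {I : Set E // IsProperIdeal eps I})
    (hF : HasHeight e0 t F.val) (hF' : HasHeight e0 t F'.val) :
    ∃ w ∈ WeylGroup.W₀ A p0, act w F = F' := by
  induction hn : (F.val ∆ F'.val).ncard using Nat.strong_induction_on generalizing F with
  | _ n ih =>
  by_cases hne : F = F'
  · exact ⟨1, one_mem _, by simp [hne]⟩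
  obtain ⟨a, ha, hSa⟩ := hE.exists_Sact_eq_symmDiff F.2 F'.2 fun h => hne (Subtype.ext h)
  have hp : eps a ≠ p0 := label_ne_of_mem_symmDiff hmono he0surj F.2.1 F'.2.1 hF hF' ha
  set F₁ := act (PresentedGroup.of (eps a)) F with hF₁def
  have hF₁ : F₁.val = F.val ∆ {a} := (hact _ _).trans hSa
  have hcloser : (F₁.val ∆ F'.val).ncard < n := by
    rw [hF₁, symmDiff_right_comm, symmDiff_of_ge (Set.singleton_subset_iff.mpr ha), ← hn]
    exact Set.ncard_sdiff_singleton_lt_of_mem ha (hE.finite_symmDiff F.2 F'.2)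
  have hF₁t : HasHeight e0 t F₁.val := by rwa [hact, hasHeight_Sact_iff he0lab hp]
  obtain ⟨w, hw, hwF⟩ := ih _ hcloser F₁ hF₁t rfl
  refine ⟨w * PresentedGroup.of (eps a), mul_mem hw (Subgroup.subset_closure ⟨eps a, hp, rfl⟩), ?_⟩
  rw [map_mul, Equiv.Perm.mul_apply, ← hF₁def, hwF]

end Action

theorem stmt8_general {P E : Type*} [Fintype P] [PartialOrder E] [LocallyFiniteOrder E]
    {A : P → P → ℤ} {eps : E → P}
    (hE : IsFullHeap A eps)
    (p0 : P) (e0 : ℤ → E) (he0mono : StrictMono e0)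
    (he0lab : ∀ t : ℤ, eps (e0 t) = p0)
    (he0surj : ∀ a : E, eps a = p0 → ∃ t : ℤ, e0 t = a)
    (act : WeylGroup A →* Equiv.Perm {I : Set E // IsProperIdeal eps I})
    (hact : ∀ (p : P) (I : {I : Set E // IsProperIdeal eps I}),
      (act (PresentedGroup.of p) I).val = Sact eps p I.val)
    (t : ℤ) :
    (∀ w ∈ Subgroup.closure {w : WeylGroup A | ∃ p : P, p ≠ p0 ∧ w = PresentedGroup.of p},
      ∀ F : {I : Set E // IsProperIdeal eps I},
        (e0 t ∈ F.val ∧ e0 (t + 1) ∉ F.val) →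
        (e0 t ∈ (act w F).val ∧ e0 (t + 1) ∉ (act w F).val)) ∧
    (∀ F F' : {I : Set E // IsProperIdeal eps I},
      (e0 t ∈ F.val ∧ e0 (t + 1) ∉ F.val) → (e0 t ∈ F'.val ∧ e0 (t + 1) ∉ F'.val) →
      ∃ w ∈ Subgroup.closure {w : WeylGroup A | ∃ p : P, p ≠ p0 ∧ w = PresentedGroup.of p},
        act w F = F') :=
  ⟨fun _ hw _ hF => hasHeight_act_of_mem_W₀ he0lab hact hw hF,
    fun F F' hF hF' => exists_mem_W₀_act_eq hE he0mono.monotone he0lab he0surj hact F F' hF hF'⟩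

/-- For an affine `A` and a fixed vertex `p0` with chain
`eps⁻¹(p0)` enumerated by the order-isomorphism `e0 : ℤ → eps⁻¹(p0)`, the
subgroup `W₀` generated by the `s_p` with `p ≠ p0` preserves the set `B_t` of
proper ideals of height `t` and acts transitively on it.  (The height of `F`
is `t` iff `e0 t ∈ F` and `e0 (t+1) ∉ F`.) -/
theorem stmt8 {P E : Type*} [Fintype P] [PartialOrder E] [LocallyFiniteOrder E]
    {A : P → P → ℤ} {eps : E → P}
    (hA : IsGCM A) (haff : IsAffine A) (hE : IsFullHeap A eps)
    (p0 : P) (e0 : ℤ → E) (he0mono : StrictMono e0)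
    (he0lab : ∀ t : ℤ, eps (e0 t) = p0)
    (he0surj : ∀ a : E, eps a = p0 → ∃ t : ℤ, e0 t = a)
    (act : WeylGroup A →* Equiv.Perm {I : Set E // IsProperIdeal eps I})
    (hact : ∀ (p : P) (I : {I : Set E // IsProperIdeal eps I}),
      (act (PresentedGroup.of p) I).val = Sact eps p I.val)
    (t : ℤ) :
    (∀ w ∈ Subgroup.closure {w : WeylGroup A | ∃ p : P, p ≠ p0 ∧ w = PresentedGroup.of p},
      ∀ F : {I : Set E // IsProperIdeal eps I},
        (e0 t ∈ F.val ∧ e0 (t + 1) ∉ F.val) →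
        (e0 t ∈ (act w F).val ∧ e0 (t + 1) ∉ (act w F).val)) ∧
    (∀ F F' : {I : Set E // IsProperIdeal eps I},
      (e0 t ∈ F.val ∧ e0 (t + 1) ∉ F.val) → (e0 t ∈ F'.val ∧ e0 (t + 1) ∉ F'.val) →
      ∃ w ∈ Subgroup.closure {w : WeylGroup A | ∃ p : P, p ≠ p0 ∧ w = PresentedGroup.of p},
        act w F = F') :=
  stmt8_general hE p0 e0 he0mono he0lab he0surj act hact t
end

section
/- Fix an integer l >= 2 and let W be the affine Weyl group of type C_l^{(1)}. For 0 <= j <= l define sigma_j : Z -> Z by sigma_j(z) = z + 1 if z ≡ j or z ≡ -j (mod 2l), sigma_j(z) = z - 1 if z ≡ j + 1 or z ≡ -j + 1 (mod 2l), and sigma_j(z) = z otherwise (these cases are mutually consistent). Then each sigma_j is a bijection of Z, there is a unique group homomorphism rho : W -> Sym(Z) with rho(s_j) = sigma_j for all 0 <= j <= l, and rho is injective (the representation is faithful). -/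
/-- The Coxeter-type relation set attached to a matrix `m` of exponents:
the relations are `(s_i s_j) ^ (m i j) = 1`.  Taking `m i i = 1` yields the
relations `s_i ^ 2 = 1`. -/
def coxRels {B : Type*} (m : B → B → ℕ) : Set (FreeGroup B) :=
  {r | ∃ i j : B, r = (FreeGroup.of i * FreeGroup.of j) ^ m i j}

/-- The Coxeter matrix of the affine Weyl group of type `C_l^{(1)}` (`l ≥ 2`):
generators `s_0, …, s_l`, relations `(s_0 s_1)^4 = (s_{l-1} s_l)^4 = 1`,
`(s_j s_{j+1})^3 = 1` for `1 ≤ j ≤ l-2`, and commutation for `|i - j| ≥ 2`. -/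
def coxMatC (l : ℕ) (i j : Fin (l + 1)) : ℕ :=
  if i = j then 1
  else if ((i : ℕ) = 0 ∧ (j : ℕ) = 1) ∨ ((i : ℕ) = 1 ∧ (j : ℕ) = 0) ∨
          ((i : ℕ) = l - 1 ∧ (j : ℕ) = l) ∨ ((i : ℕ) = l ∧ (j : ℕ) = l - 1) then 4
  else if (i : ℕ) + 1 = (j : ℕ) ∨ (j : ℕ) + 1 = (i : ℕ) then 3
  else 2

/-- The permutation `σ_j` of `ℤ`: add 1 on `z ≡ ±j`, subtract 1 on
`z ≡ ±j + 1 (mod 2l)`, identity otherwise. -/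
def sigmaC (l : ℕ) (j : Fin (l + 1)) (z : ℤ) : ℤ :=
  if (z - (j : ℕ)) % (2 * (l : ℤ)) = 0 ∨ (z + (j : ℕ)) % (2 * (l : ℤ)) = 0 then z + 1
  else if (z - (j : ℕ) - 1) % (2 * (l : ℤ)) = 0 ∨ (z + (j : ℕ) - 1) % (2 * (l : ℤ)) = 0
    then z - 1
  else z

namespace Stmt11

/-- `z ≡ a (mod 2l)`. -/
def Cg (l : ℕ) (z a : ℤ) : Prop := (2*(l:ℤ)) ∣ (z - a)

lemma cg_def {l : ℕ} {z a : ℤ} : Cg l z a ↔ (2*(l:ℤ)) ∣ (z - a) := Iff.rfl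

lemma Cg.refl (l : ℕ) (z : ℤ) : Cg l z z := by simp [Cg]

lemma cg_congr {l : ℕ} {z a b : ℤ} (h : z - a = z - b) : Cg l z a ↔ Cg l z b := by
  rw [cg_def, cg_def, h]

lemma Cg.addc {l : ℕ} {z a : ℤ} (c : ℤ) (h : Cg l z a) : Cg l (z+c) (a+c) := by
  rw [cg_def] at h ⊢; convert h using 1; ring

lemma Cg.shift {l : ℕ} {z a : ℤ} (k : ℤ) (h : Cg l z a) : Cg l z (a + 2*(l:ℤ)*k) := by
  obtain ⟨t, ht⟩ := h
  exact ⟨t - k, by linarith [ht]⟩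

lemma Cg.one_sub {l : ℕ} {z a : ℤ} (h : Cg l z a) : Cg l (1-z) (1-a) := by
  obtain ⟨t, ht⟩ := h
  exact ⟨-t, by linarith [ht]⟩

lemma Cg.dvd_of {l : ℕ} {z a b : ℤ} (h1 : Cg l z a) (h2 : Cg l z b) : (2*(l:ℤ)) ∣ (b - a) := by
  obtain ⟨t, ht⟩ := h1; obtain ⟨u, hu⟩ := h2
  exact ⟨t - u, by linarith⟩

lemma not_Cg {l : ℕ} {z a b : ℤ} (h1 : Cg l z a) (hd : ¬ (2*(l:ℤ)) ∣ (b - a)) : ¬ Cg l z b :=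
  fun h2 => hd (Cg.dvd_of h1 h2)

lemma nd_parity {l : ℕ} {d : ℤ} (h : ¬ (2:ℤ) ∣ d) : ¬ (2*(l:ℤ)) ∣ d :=
  fun hd => h (dvd_trans ⟨(l:ℤ), rfl⟩ hd)

lemma nd_small {l : ℕ} {d : ℤ} (h0 : d ≠ 0) (h1 : -(2*(l:ℤ)) < d) (h2 : d < 2*(l:ℤ)) :
    ¬ (2*(l:ℤ)) ∣ d := fun hd => h0 (Int.eq_zero_of_abs_lt_dvd hd (abs_lt.mpr ⟨h1, h2⟩))

lemma parity_helper {l : ℕ} {z a b : ℤ} (h1 : Cg l z a) (h2 : Cg l z b) (hodd : ¬ (2:ℤ) ∣ (b-a)) :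
    False := nd_parity (l := l) hodd (Cg.dvd_of h1 h2)

lemma sig_up {l : ℕ} {j : Fin (l+1)} {z : ℤ}
    (h : Cg l z ((j:ℕ):ℤ) ∨ Cg l z (-((j:ℕ):ℤ))) : sigmaC l j z = z + 1 := by
  unfold sigmaC
  rw [if_pos]
  rcases h with h | h
  · exact Or.inl (Int.emod_eq_zero_of_dvd (cg_def.mp h))
  · refine Or.inr (Int.emod_eq_zero_of_dvd ?_)
    have := cg_def.mp h; convert this using 1; ring

lemma sig_down {l : ℕ} {j : Fin (l+1)} {z : ℤ}
    (h : Cg l z (((j:ℕ):ℤ)+1) ∨ Cg l z (-((j:ℕ):ℤ)+1)) : sigmaC l j z = z - 1 := by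
  unfold sigmaC
  rw [if_neg, if_pos]
  · rcases h with h | h
    · refine Or.inl (Int.emod_eq_zero_of_dvd ?_)
      have := cg_def.mp h; convert this using 1; ring
    · refine Or.inr (Int.emod_eq_zero_of_dvd ?_)
      have := cg_def.mp h; convert this using 1; ring
  · rintro (hc | hc)
    · have hc' : Cg l z ((j:ℕ):ℤ) := cg_def.mpr (Int.dvd_of_emod_eq_zero hc)
      rcases h with h | h
      · exact parity_helper hc' h (by omega)
      · exact parity_helper hc' h (by omega)
    · have hc' : Cg l z (-((j:ℕ):ℤ)) := by
        rw [cg_def, sub_neg_eq_add]; exact Int.dvd_of_emod_eq_zero hc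
      rcases h with h | h
      · exact parity_helper hc' h (by omega)
      · exact parity_helper hc' h (by omega)

lemma sig_fix {l : ℕ} {j : Fin (l+1)} {z : ℤ}
    (h1 : ¬ Cg l z ((j:ℕ):ℤ)) (h2 : ¬ Cg l z (-((j:ℕ):ℤ)))
    (h3 : ¬ Cg l z (((j:ℕ):ℤ)+1)) (h4 : ¬ Cg l z (-((j:ℕ):ℤ)+1)) : sigmaC l j z = z := by
  unfold sigmaC
  rw [if_neg, if_neg]
  · rintro (hc | hc)
    · refine h3 (cg_def.mpr ?_)
      have := Int.dvd_of_emod_eq_zero hc; convert this using 1; ring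
    · refine h4 (cg_def.mpr ?_)
      have := Int.dvd_of_emod_eq_zero hc; convert this using 1; ring
  · rintro (hc | hc)
    · exact h1 (cg_def.mpr (Int.dvd_of_emod_eq_zero hc))
    · refine h2 (cg_def.mpr ?_)
      have := Int.dvd_of_emod_eq_zero hc; convert this using 1; ring


lemma cg_shift_left {l : ℕ} {z a : ℤ} : Cg l (z + 2*(l:ℤ)) a ↔ Cg l z a := by
  constructor
  · intro h; obtain ⟨t, ht⟩ := h; exact ⟨t - 1, by linarith⟩
  · intro h; obtain ⟨t, ht⟩ := h; exact ⟨t + 1, by linarith⟩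

lemma sig_invol {l : ℕ} (j : Fin (l+1)) (z : ℤ) : sigmaC l j (sigmaC l j z) = z := by
  set c : ℤ := ((j:ℕ):ℤ) with hc
  by_cases hup : Cg l z c ∨ Cg l z (-c)
  · rw [sig_up hup, sig_down]
    · ring
    · rcases hup with h | h
      · exact Or.inl (by simpa using h.addc 1)
      · exact Or.inr (by simpa using h.addc 1)
  · by_cases hdn : Cg l z (c+1) ∨ Cg l z (-c+1)
    · rw [sig_down hdn, sig_up]
      · ring
      · rcases hdn with h | h
        · exact Or.inl (by simpa [sub_eq_add_neg] using h.addc (-1))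
        · exact Or.inr (by simpa [sub_eq_add_neg] using h.addc (-1))
    · push_neg at hup hdn
      rw [sig_fix hup.1 hup.2 hdn.1 hdn.2, sig_fix hup.1 hup.2 hdn.1 hdn.2]

lemma sig_shift {l : ℕ} (j : Fin (l+1)) (z : ℤ) :
    sigmaC l j (z + 2*(l:ℤ)) = sigmaC l j z + 2*(l:ℤ) := by
  set c : ℤ := ((j:ℕ):ℤ) with hc
  by_cases hup : Cg l z c ∨ Cg l z (-c)
  · rw [sig_up hup, sig_up]
    · ring
    · rcases hup with h | h
      · exact Or.inl (cg_shift_left.mpr h)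
      · exact Or.inr (cg_shift_left.mpr h)
  · by_cases hdn : Cg l z (c+1) ∨ Cg l z (-c+1)
    · rw [sig_down hdn, sig_down]
      · ring
      · rcases hdn with h | h
        · exact Or.inl (cg_shift_left.mpr h)
        · exact Or.inr (cg_shift_left.mpr h)
    · push_neg at hup hdn
      rw [sig_fix hup.1 hup.2 hdn.1 hdn.2,
        sig_fix (fun h => hup.1 (cg_shift_left.mp h)) (fun h => hup.2 (cg_shift_left.mp h))
          (fun h => hdn.1 (cg_shift_left.mp h)) (fun h => hdn.2 (cg_shift_left.mp h))]

lemma cg_mirror {l : ℕ} {z a : ℤ} : Cg l (1-z) (1-a) ↔ Cg l z a := by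
  constructor
  · intro h; obtain ⟨t, ht⟩ := h; exact ⟨-t, by linarith⟩
  · exact Cg.one_sub

lemma sig_mirror {l : ℕ} (j : Fin (l+1)) (z : ℤ) :
    sigmaC l j (1 - z) = 1 - sigmaC l j z := by
  set c : ℤ := ((j:ℕ):ℤ) with hc
  by_cases hup : Cg l z c ∨ Cg l z (-c)
  · rw [sig_up hup, sig_down]
    · ring
    · rcases hup with h | h
      · exact Or.inr (by
          have := h.one_sub
          rwa [show (1:ℤ) - c = -c + 1 by ring] at this)
      · exact Or.inl (by
          have := h.one_sub
          rwa [show (1:ℤ) - -c = c + 1 by ring] at this)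
  · by_cases hdn : Cg l z (c+1) ∨ Cg l z (-c+1)
    · rw [sig_down hdn, sig_up]
      · ring
      · rcases hdn with h | h
        · exact Or.inr (by
            have := h.one_sub
            rwa [show (1:ℤ) - (c+1) = -c by ring] at this)
        · exact Or.inl (by
            have := h.one_sub
            rwa [show (1:ℤ) - (-c+1) = c by ring] at this)
    · push_neg at hup hdn
      rw [sig_fix hup.1 hup.2 hdn.1 hdn.2]
      rw [sig_fix]
      · intro h
        exact hdn.2 (by
          have := h.one_sub
          rwa [show (1:ℤ) - (1-z) = z by ring, show (1:ℤ) - c = -c + 1 by ring] at this)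
      · intro h
        exact hdn.1 (by
          have := h.one_sub
          rwa [show (1:ℤ) - (1-z) = z by ring, show (1:ℤ) - -c = c + 1 by ring] at this)
      · intro h
        exact hup.2 (by
          have := h.one_sub
          rwa [show (1:ℤ) - (1-z) = z by ring, show (1:ℤ) - (c+1) = -c by ring] at this)
      · intro h
        exact hup.1 (by
          have := h.one_sub
          rwa [show (1:ℤ) - (1-z) = z by ring, show (1:ℤ) - (-c+1) = c by ring] at this)

/-- `σ_j` as a permutation of `ℤ`. -/
def sigP (l : ℕ) (j : Fin (l+1)) : Equiv.Perm ℤ :=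
  Function.Involutive.toPerm (sigmaC l j) (fun z => sig_invol j z)

@[simp] lemma sigP_apply {l : ℕ} (j : Fin (l+1)) (z : ℤ) : sigP l j z = sigmaC l j z := rfl

lemma sigP_sq {l : ℕ} (j : Fin (l+1)) : sigP l j * sigP l j = 1 := by
  ext z
  simp [sigP_apply, Equiv.Perm.mul_apply, sig_invol]


lemma Cg.adj {l : ℕ} {z a b : ℤ} (h : Cg l z a) (k : ℤ) (e : b = a + 2*(l:ℤ)*k) : Cg l z b :=
  e ▸ h.shift k

/-- Transfer a congruence fact to any other point/class pair differing by the same amount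
modulo `2l`. -/
lemma Cg.tr {l : ℕ} {z a : ℤ} (h : Cg l z a) {p b : ℤ} (k : ℤ)
    (e : p - b = z - a + 2*(l:ℤ)*k) : Cg l p b := by
  obtain ⟨t, ht⟩ := h
  exact ⟨t + k, by linarith⟩

lemma nCg0 {l : ℕ} {p e b : ℤ} (hp : Cg l p e)
    (h : ¬ (2:ℤ) ∣ (b - e) ∨ ((b-e) ≠ 0 ∧ -(2*(l:ℤ)) < b-e ∧ b-e < 2*(l:ℤ))) : ¬ Cg l p b := by
  intro hb
  have hd := Cg.dvd_of hp hb
  rcases h with h | ⟨h1, h2, h3⟩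
  · exact nd_parity (l := l) h hd
  · exact nd_small h1 h2 h3 hd

lemma nCgm {l : ℕ} {p e b : ℤ} (hp : Cg l p e)
    (h : ¬ (2:ℤ) ∣ (b - e + 2*(l:ℤ)) ∨
      ((b-e+2*(l:ℤ)) ≠ 0 ∧ -(2*(l:ℤ)) < b-e+2*(l:ℤ) ∧ b-e+2*(l:ℤ) < 2*(l:ℤ))) : ¬ Cg l p b := by
  intro hb
  have hd := Cg.dvd_of hp hb
  have hd2 : (2*(l:ℤ)) ∣ (b - e + 2*(l:ℤ)) := by
    obtain ⟨t, ht⟩ := hd; exact ⟨t + 1, by linarith⟩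
  rcases h with h | ⟨h1, h2, h3⟩
  · exact nd_parity (l := l) h hd2
  · exact nd_small h1 h2 h3 hd2

lemma sig_up' {l : ℕ} {j : Fin (l+1)} {c z : ℤ} (hc : ((j:ℕ):ℤ) = c)
    (h : Cg l z c ∨ Cg l z (-c)) : sigmaC l j z = z + 1 := sig_up (by rw [hc]; exact h)

lemma sig_down' {l : ℕ} {j : Fin (l+1)} {c z : ℤ} (hc : ((j:ℕ):ℤ) = c)
    (h : Cg l z (c+1) ∨ Cg l z (-c+1)) : sigmaC l j z = z - 1 := sig_down (by rw [hc]; exact h)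

lemma sig_fix' {l : ℕ} {j : Fin (l+1)} {c z : ℤ} (hc : ((j:ℕ):ℤ) = c)
    (h1 : ¬ Cg l z c) (h2 : ¬ Cg l z (-c)) (h3 : ¬ Cg l z (c+1)) (h4 : ¬ Cg l z (-c+1)) :
    sigmaC l j z = z := sig_fix (hc ▸ h1) (hc ▸ h2) (hc ▸ h3) (hc ▸ h4)


lemma nCg {l : ℕ} {p e b : ℤ} (hp : Cg l p e)
    (h : ¬ (2:ℤ) ∣ (b - e) ∨
      ((b-e) ≠ 0 ∧ -(2*(l:ℤ)) < b-e ∧ b-e < 2*(l:ℤ)) ∨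
      ((b-e+2*(l:ℤ)) ≠ 0 ∧ -(2*(l:ℤ)) < b-e+2*(l:ℤ) ∧ b-e+2*(l:ℤ) < 2*(l:ℤ)) ∨
      ((b-e-2*(l:ℤ)) ≠ 0 ∧ -(2*(l:ℤ)) < b-e-2*(l:ℤ) ∧ b-e-2*(l:ℤ) < 2*(l:ℤ))) :
    ¬ Cg l p b := by
  intro hb
  have hd := Cg.dvd_of hp hb
  obtain ⟨t, ht⟩ := hd
  rcases h with h | ⟨h1,h2,h3⟩ | ⟨h1,h2,h3⟩ | ⟨h1,h2,h3⟩
  · exact nd_parity (l := l) h ⟨t, ht⟩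
  · exact nd_small h1 h2 h3 ⟨t, ht⟩
  · exact nd_small h1 h2 h3 ⟨t + 1, by linarith⟩
  · exact nd_small h1 h2 h3 ⟨t - 1, by linarith⟩



section Rels
variable {l : ℕ} {i j : Fin (l+1)}

lemma rel4a_pt (hl : 2 ≤ l) (hi : ((i:ℕ):ℤ) = 0) (hj : ((j:ℕ):ℤ) = 1) (z : ℤ) :
    sigmaC l i (sigmaC l j (sigmaC l i (sigmaC l j (sigmaC l i (sigmaC l j (sigmaC l i (sigmaC l j (z)))))))) = z := by
  have hL : (2:ℤ) ≤ (l:ℤ) := by exact_mod_cast hl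
  by_cases h0 : Cg l z (0)
  · have p0 : Cg l (z) (0) := h0.tr 0 (by ring)
    have pm1 : Cg l (z - 1) (-1) := h0.tr 0 (by ring)
    have p1 : Cg l (z + 1) (1) := h0.tr 0 (by ring)
    have p2 : Cg l (z + 2) (2) := h0.tr 0 (by ring)
    have s1 : sigmaC l j (z) = z - 1 := (sig_down' hj (Or.inr (p0.tr (0) (by ring)))).trans (by ring)
    have s2 : sigmaC l i (z - 1) = z - 1 := sig_fix' hi (nCg pm1 (by omega)) (nCg pm1 (by omega)) (nCg pm1 (by omega)) (nCg pm1 (by omega))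
    have s3 : sigmaC l j (z - 1) = z := (sig_up' hj (Or.inr (pm1.tr (0) (by ring)))).trans (by ring)
    have s4 : sigmaC l i (z) = z + 1 := (sig_up' hi (Or.inl (p0.tr (0) (by ring)))).trans (by ring)
    have s5 : sigmaC l j (z + 1) = z + 2 := (sig_up' hj (Or.inl (p1.tr (0) (by ring)))).trans (by ring)
    have s6 : sigmaC l i (z + 2) = z + 2 := sig_fix' hi (nCg p2 (by omega)) (nCg p2 (by omega)) (nCg p2 (by omega)) (nCg p2 (by omega))
    have s7 : sigmaC l j (z + 2) = z + 1 := (sig_down' hj (Or.inl (p2.tr (0) (by ring)))).trans (by ring)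
    have s8 : sigmaC l i (z + 1) = z := (sig_down' hi (Or.inl (p1.tr (0) (by ring)))).trans (by ring)
    rw [s1, s2, s3, s4, s5, s6, s7, s8]
  ·
    by_cases h1 : Cg l z (1)
    · have p0 : Cg l (z) (1) := h1.tr 0 (by ring)
      have p1 : Cg l (z + 1) (2) := h1.tr 0 (by ring)
      have pm1 : Cg l (z - 1) (0) := h1.tr 0 (by ring)
      have pm2 : Cg l (z - 2) (-1) := h1.tr 0 (by ring)
      have s1 : sigmaC l j (z) = z + 1 := (sig_up' hj (Or.inl (p0.tr (0) (by ring)))).trans (by ring)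
      have s2 : sigmaC l i (z + 1) = z + 1 := sig_fix' hi (nCg p1 (by omega)) (nCg p1 (by omega)) (nCg p1 (by omega)) (nCg p1 (by omega))
      have s3 : sigmaC l j (z + 1) = z := (sig_down' hj (Or.inl (p1.tr (0) (by ring)))).trans (by ring)
      have s4 : sigmaC l i (z) = z - 1 := (sig_down' hi (Or.inl (p0.tr (0) (by ring)))).trans (by ring)
      have s5 : sigmaC l j (z - 1) = z - 2 := (sig_down' hj (Or.inr (pm1.tr (0) (by ring)))).trans (by ring)
      have s6 : sigmaC l i (z - 2) = z - 2 := sig_fix' hi (nCg pm2 (by omega)) (nCg pm2 (by omega)) (nCg pm2 (by omega)) (nCg pm2 (by omega))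
      have s7 : sigmaC l j (z - 2) = z - 1 := (sig_up' hj (Or.inr (pm2.tr (0) (by ring)))).trans (by ring)
      have s8 : sigmaC l i (z - 1) = z := (sig_up' hi (Or.inl (pm1.tr (0) (by ring)))).trans (by ring)
      rw [s1, s2, s3, s4, s5, s6, s7, s8]
    ·
      by_cases h2 : Cg l z (2)
      · have p0 : Cg l (z) (2) := h2.tr 0 (by ring)
        have pm1 : Cg l (z - 1) (1) := h2.tr 0 (by ring)
        have pm2 : Cg l (z - 2) (0) := h2.tr 0 (by ring)
        have pm3 : Cg l (z - 3) (-1) := h2.tr 0 (by ring)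
        have s1 : sigmaC l j (z) = z - 1 := (sig_down' hj (Or.inl (p0.tr (0) (by ring)))).trans (by ring)
        have s2 : sigmaC l i (z - 1) = z - 2 := (sig_down' hi (Or.inl (pm1.tr (0) (by ring)))).trans (by ring)
        have s3 : sigmaC l j (z - 2) = z - 3 := (sig_down' hj (Or.inr (pm2.tr (0) (by ring)))).trans (by ring)
        have s4 : sigmaC l i (z - 3) = z - 3 := sig_fix' hi (nCg pm3 (by omega)) (nCg pm3 (by omega)) (nCg pm3 (by omega)) (nCg pm3 (by omega))
        have s5 : sigmaC l j (z - 3) = z - 2 := (sig_up' hj (Or.inr (pm3.tr (0) (by ring)))).trans (by ring)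
        have s6 : sigmaC l i (z - 2) = z - 1 := (sig_up' hi (Or.inl (pm2.tr (0) (by ring)))).trans (by ring)
        have s7 : sigmaC l j (z - 1) = z := (sig_up' hj (Or.inl (pm1.tr (0) (by ring)))).trans (by ring)
        have s8 : sigmaC l i (z) = z := sig_fix' hi (nCg p0 (by omega)) (nCg p0 (by omega)) (nCg p0 (by omega)) (nCg p0 (by omega))
        rw [s1, s2, s3, s4, s5, s6, s7, s8]
      ·
        by_cases hm1 : Cg l z (-1)
        · have p0 : Cg l (z) (-1) := hm1.tr 0 (by ring)
          have p1 : Cg l (z + 1) (0) := hm1.tr 0 (by ring)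
          have p2 : Cg l (z + 2) (1) := hm1.tr 0 (by ring)
          have p3 : Cg l (z + 3) (2) := hm1.tr 0 (by ring)
          have s1 : sigmaC l j (z) = z + 1 := (sig_up' hj (Or.inr (p0.tr (0) (by ring)))).trans (by ring)
          have s2 : sigmaC l i (z + 1) = z + 2 := (sig_up' hi (Or.inl (p1.tr (0) (by ring)))).trans (by ring)
          have s3 : sigmaC l j (z + 2) = z + 3 := (sig_up' hj (Or.inl (p2.tr (0) (by ring)))).trans (by ring)
          have s4 : sigmaC l i (z + 3) = z + 3 := sig_fix' hi (nCg p3 (by omega)) (nCg p3 (by omega)) (nCg p3 (by omega)) (nCg p3 (by omega))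
          have s5 : sigmaC l j (z + 3) = z + 2 := (sig_down' hj (Or.inl (p3.tr (0) (by ring)))).trans (by ring)
          have s6 : sigmaC l i (z + 2) = z + 1 := (sig_down' hi (Or.inl (p2.tr (0) (by ring)))).trans (by ring)
          have s7 : sigmaC l j (z + 1) = z := (sig_down' hj (Or.inr (p1.tr (0) (by ring)))).trans (by ring)
          have s8 : sigmaC l i (z) = z := sig_fix' hi (nCg p0 (by omega)) (nCg p0 (by omega)) (nCg p0 (by omega)) (nCg p0 (by omega))
          rw [s1, s2, s3, s4, s5, s6, s7, s8]
        · have fi : sigmaC l i z = z := sig_fix' hi (fun h => h0 (h.tr (0) (by ring))) (fun h => h0 (h.tr (0) (by ring))) (fun h => h1 (h.tr (0) (by ring))) (fun h => h1 (h.tr (0) (by ring)))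
          have fj : sigmaC l j z = z := sig_fix' hj (fun h => h1 (h.tr (0) (by ring))) (fun h => hm1 (h.tr (0) (by ring))) (fun h => h2 (h.tr (0) (by ring))) (fun h => h0 (h.tr (0) (by ring)))
          simp only [fi, fj]

lemma rel4b_pt (hl : 2 ≤ l) (hi : ((i:ℕ):ℤ) = (l:ℤ) - 1) (hj : ((j:ℕ):ℤ) = (l:ℤ)) (z : ℤ) :
    sigmaC l i (sigmaC l j (sigmaC l i (sigmaC l j (sigmaC l i (sigmaC l j (sigmaC l i (sigmaC l j (z)))))))) = z := by
  have hL : (2:ℤ) ≤ (l:ℤ) := by exact_mod_cast hl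
  by_cases hA : Cg l z ((l:ℤ) - 1)
  · have p0 : Cg l (z) ((l:ℤ) - 1) := hA.tr 0 (by ring)
    have p1 : Cg l (z + 1) ((l:ℤ)) := hA.tr 0 (by ring)
    have p2 : Cg l (z + 2) ((l:ℤ) + 1) := hA.tr 0 (by ring)
    have p3 : Cg l (z + 3) ((l:ℤ) + 2) := hA.tr 0 (by ring)
    have s1 : sigmaC l j (z) = z := sig_fix' hj (nCg p0 (by omega)) (nCg p0 (by omega)) (nCg p0 (by omega)) (nCg p0 (by omega))
    have s2 : sigmaC l i (z) = z + 1 := (sig_up' hi (Or.inl (p0.tr (0) (by ring)))).trans (by ring)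
    have s3 : sigmaC l j (z + 1) = z + 2 := (sig_up' hj (Or.inl (p1.tr (0) (by ring)))).trans (by ring)
    have s4 : sigmaC l i (z + 2) = z + 3 := (sig_up' hi (Or.inr (p2.tr (1) (by ring)))).trans (by ring)
    have s5 : sigmaC l j (z + 3) = z + 3 := sig_fix' hj (nCg p3 (by omega)) (nCg p3 (by omega)) (nCg p3 (by omega)) (nCg p3 (by omega))
    have s6 : sigmaC l i (z + 3) = z + 2 := (sig_down' hi (Or.inr (p3.tr (1) (by ring)))).trans (by ring)
    have s7 : sigmaC l j (z + 2) = z + 1 := (sig_down' hj (Or.inl (p2.tr (0) (by ring)))).trans (by ring)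
    have s8 : sigmaC l i (z + 1) = z := (sig_down' hi (Or.inl (p1.tr (0) (by ring)))).trans (by ring)
    rw [s1, s2, s3, s4, s5, s6, s7, s8]
  ·
    by_cases hB : Cg l z ((l:ℤ))
    · have p0 : Cg l (z) ((l:ℤ)) := hB.tr 0 (by ring)
      have p1 : Cg l (z + 1) ((l:ℤ) + 1) := hB.tr 0 (by ring)
      have p2 : Cg l (z + 2) ((l:ℤ) + 2) := hB.tr 0 (by ring)
      have pm1 : Cg l (z - 1) ((l:ℤ) - 1) := hB.tr 0 (by ring)
      have s1 : sigmaC l j (z) = z + 1 := (sig_up' hj (Or.inl (p0.tr (0) (by ring)))).trans (by ring)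
      have s2 : sigmaC l i (z + 1) = z + 2 := (sig_up' hi (Or.inr (p1.tr (1) (by ring)))).trans (by ring)
      have s3 : sigmaC l j (z + 2) = z + 2 := sig_fix' hj (nCg p2 (by omega)) (nCg p2 (by omega)) (nCg p2 (by omega)) (nCg p2 (by omega))
      have s4 : sigmaC l i (z + 2) = z + 1 := (sig_down' hi (Or.inr (p2.tr (1) (by ring)))).trans (by ring)
      have s5 : sigmaC l j (z + 1) = z := (sig_down' hj (Or.inl (p1.tr (0) (by ring)))).trans (by ring)
      have s6 : sigmaC l i (z) = z - 1 := (sig_down' hi (Or.inl (p0.tr (0) (by ring)))).trans (by ring)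
      have s7 : sigmaC l j (z - 1) = z - 1 := sig_fix' hj (nCg pm1 (by omega)) (nCg pm1 (by omega)) (nCg pm1 (by omega)) (nCg pm1 (by omega))
      have s8 : sigmaC l i (z - 1) = z := (sig_up' hi (Or.inl (pm1.tr (0) (by ring)))).trans (by ring)
      rw [s1, s2, s3, s4, s5, s6, s7, s8]
    ·
      by_cases hC : Cg l z ((l:ℤ) + 1)
      · have p0 : Cg l (z) ((l:ℤ) + 1) := hC.tr 0 (by ring)
        have pm1 : Cg l (z - 1) ((l:ℤ)) := hC.tr 0 (by ring)
        have pm2 : Cg l (z - 2) ((l:ℤ) - 1) := hC.tr 0 (by ring)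
        have p1 : Cg l (z + 1) ((l:ℤ) + 2) := hC.tr 0 (by ring)
        have s1 : sigmaC l j (z) = z - 1 := (sig_down' hj (Or.inl (p0.tr (0) (by ring)))).trans (by ring)
        have s2 : sigmaC l i (z - 1) = z - 2 := (sig_down' hi (Or.inl (pm1.tr (0) (by ring)))).trans (by ring)
        have s3 : sigmaC l j (z - 2) = z - 2 := sig_fix' hj (nCg pm2 (by omega)) (nCg pm2 (by omega)) (nCg pm2 (by omega)) (nCg pm2 (by omega))
        have s4 : sigmaC l i (z - 2) = z - 1 := (sig_up' hi (Or.inl (pm2.tr (0) (by ring)))).trans (by ring)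
        have s5 : sigmaC l j (z - 1) = z := (sig_up' hj (Or.inl (pm1.tr (0) (by ring)))).trans (by ring)
        have s6 : sigmaC l i (z) = z + 1 := (sig_up' hi (Or.inr (p0.tr (1) (by ring)))).trans (by ring)
        have s7 : sigmaC l j (z + 1) = z + 1 := sig_fix' hj (nCg p1 (by omega)) (nCg p1 (by omega)) (nCg p1 (by omega)) (nCg p1 (by omega))
        have s8 : sigmaC l i (z + 1) = z := (sig_down' hi (Or.inr (p1.tr (1) (by ring)))).trans (by ring)
        rw [s1, s2, s3, s4, s5, s6, s7, s8]
      ·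
        by_cases hD : Cg l z ((l:ℤ) + 2)
        · have p0 : Cg l (z) ((l:ℤ) + 2) := hD.tr 0 (by ring)
          have pm1 : Cg l (z - 1) ((l:ℤ) + 1) := hD.tr 0 (by ring)
          have pm2 : Cg l (z - 2) ((l:ℤ)) := hD.tr 0 (by ring)
          have pm3 : Cg l (z - 3) ((l:ℤ) - 1) := hD.tr 0 (by ring)
          have s1 : sigmaC l j (z) = z := sig_fix' hj (nCg p0 (by omega)) (nCg p0 (by omega)) (nCg p0 (by omega)) (nCg p0 (by omega))
          have s2 : sigmaC l i (z) = z - 1 := (sig_down' hi (Or.inr (p0.tr (1) (by ring)))).trans (by ring)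
          have s3 : sigmaC l j (z - 1) = z - 2 := (sig_down' hj (Or.inl (pm1.tr (0) (by ring)))).trans (by ring)
          have s4 : sigmaC l i (z - 2) = z - 3 := (sig_down' hi (Or.inl (pm2.tr (0) (by ring)))).trans (by ring)
          have s5 : sigmaC l j (z - 3) = z - 3 := sig_fix' hj (nCg pm3 (by omega)) (nCg pm3 (by omega)) (nCg pm3 (by omega)) (nCg pm3 (by omega))
          have s6 : sigmaC l i (z - 3) = z - 2 := (sig_up' hi (Or.inl (pm3.tr (0) (by ring)))).trans (by ring)
          have s7 : sigmaC l j (z - 2) = z - 1 := (sig_up' hj (Or.inl (pm2.tr (0) (by ring)))).trans (by ring)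
          have s8 : sigmaC l i (z - 1) = z := (sig_up' hi (Or.inr (pm1.tr (1) (by ring)))).trans (by ring)
          rw [s1, s2, s3, s4, s5, s6, s7, s8]
        · have fi : sigmaC l i z = z := sig_fix' hi (fun h => hA (h.tr (0) (by ring))) (fun h => hC (h.tr (-1) (by ring))) (fun h => hB (h.tr (0) (by ring))) (fun h => hD (h.tr (-1) (by ring)))
          have fj : sigmaC l j z = z := sig_fix' hj (fun h => hB (h.tr (0) (by ring))) (fun h => hB (h.tr (-1) (by ring))) (fun h => hC (h.tr (0) (by ring))) (fun h => hC (h.tr (-1) (by ring)))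
          simp only [fi, fj]

lemma rel3_pt (hl : 2 ≤ l) (I : ℤ) (hi : ((i:ℕ):ℤ) = I) (hj : ((j:ℕ):ℤ) = I + 1)
    (hI1 : 1 ≤ I) (hI2 : I ≤ (l:ℤ) - 2) (z : ℤ) :
    sigmaC l i (sigmaC l j (sigmaC l i (sigmaC l j (sigmaC l i (sigmaC l j (z)))))) = z := by
  have hL : (2:ℤ) ≤ (l:ℤ) := by exact_mod_cast hl
  by_cases hA : Cg l z (I)
  · have p0 : Cg l (z) (I) := hA.tr 0 (by ring)
    have p1 : Cg l (z + 1) (I + 1) := hA.tr 0 (by ring)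
    have p2 : Cg l (z + 2) (I + 2) := hA.tr 0 (by ring)
    have s1 : sigmaC l j (z) = z := sig_fix' hj (nCg p0 (by omega)) (nCg p0 (by omega)) (nCg p0 (by omega)) (nCg p0 (by omega))
    have s2 : sigmaC l i (z) = z + 1 := (sig_up' hi (Or.inl (p0.tr (0) (by ring)))).trans (by ring)
    have s3 : sigmaC l j (z + 1) = z + 2 := (sig_up' hj (Or.inl (p1.tr (0) (by ring)))).trans (by ring)
    have s4 : sigmaC l i (z + 2) = z + 2 := sig_fix' hi (nCg p2 (by omega)) (nCg p2 (by omega)) (nCg p2 (by omega)) (nCg p2 (by omega))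
    have s5 : sigmaC l j (z + 2) = z + 1 := (sig_down' hj (Or.inl (p2.tr (0) (by ring)))).trans (by ring)
    have s6 : sigmaC l i (z + 1) = z := (sig_down' hi (Or.inl (p1.tr (0) (by ring)))).trans (by ring)
    rw [s1, s2, s3, s4, s5, s6]
  ·
    by_cases hB : Cg l z (I + 1)
    · have p0 : Cg l (z) (I + 1) := hB.tr 0 (by ring)
      have p1 : Cg l (z + 1) (I + 2) := hB.tr 0 (by ring)
      have pm1 : Cg l (z - 1) (I) := hB.tr 0 (by ring)
      have s1 : sigmaC l j (z) = z + 1 := (sig_up' hj (Or.inl (p0.tr (0) (by ring)))).trans (by ring)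
      have s2 : sigmaC l i (z + 1) = z + 1 := sig_fix' hi (nCg p1 (by omega)) (nCg p1 (by omega)) (nCg p1 (by omega)) (nCg p1 (by omega))
      have s3 : sigmaC l j (z + 1) = z := (sig_down' hj (Or.inl (p1.tr (0) (by ring)))).trans (by ring)
      have s4 : sigmaC l i (z) = z - 1 := (sig_down' hi (Or.inl (p0.tr (0) (by ring)))).trans (by ring)
      have s5 : sigmaC l j (z - 1) = z - 1 := sig_fix' hj (nCg pm1 (by omega)) (nCg pm1 (by omega)) (nCg pm1 (by omega)) (nCg pm1 (by omega))
      have s6 : sigmaC l i (z - 1) = z := (sig_up' hi (Or.inl (pm1.tr (0) (by ring)))).trans (by ring)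
      rw [s1, s2, s3, s4, s5, s6]
    ·
      by_cases hC : Cg l z (I + 2)
      · have p0 : Cg l (z) (I + 2) := hC.tr 0 (by ring)
        have pm1 : Cg l (z - 1) (I + 1) := hC.tr 0 (by ring)
        have pm2 : Cg l (z - 2) (I) := hC.tr 0 (by ring)
        have s1 : sigmaC l j (z) = z - 1 := (sig_down' hj (Or.inl (p0.tr (0) (by ring)))).trans (by ring)
        have s2 : sigmaC l i (z - 1) = z - 2 := (sig_down' hi (Or.inl (pm1.tr (0) (by ring)))).trans (by ring)
        have s3 : sigmaC l j (z - 2) = z - 2 := sig_fix' hj (nCg pm2 (by omega)) (nCg pm2 (by omega)) (nCg pm2 (by omega)) (nCg pm2 (by omega))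
        have s4 : sigmaC l i (z - 2) = z - 1 := (sig_up' hi (Or.inl (pm2.tr (0) (by ring)))).trans (by ring)
        have s5 : sigmaC l j (z - 1) = z := (sig_up' hj (Or.inl (pm1.tr (0) (by ring)))).trans (by ring)
        have s6 : sigmaC l i (z) = z := sig_fix' hi (nCg p0 (by omega)) (nCg p0 (by omega)) (nCg p0 (by omega)) (nCg p0 (by omega))
        rw [s1, s2, s3, s4, s5, s6]
      ·
        by_cases hD : Cg l z (-I - 1)
        · have p0 : Cg l (z) (-I - 1) := hD.tr 0 (by ring)
          have p1 : Cg l (z + 1) (-I) := hD.tr 0 (by ring)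
          have p2 : Cg l (z + 2) (-I + 1) := hD.tr 0 (by ring)
          have s1 : sigmaC l j (z) = z + 1 := (sig_up' hj (Or.inr (p0.tr (0) (by ring)))).trans (by ring)
          have s2 : sigmaC l i (z + 1) = z + 2 := (sig_up' hi (Or.inr (p1.tr (0) (by ring)))).trans (by ring)
          have s3 : sigmaC l j (z + 2) = z + 2 := sig_fix' hj (nCg p2 (by omega)) (nCg p2 (by omega)) (nCg p2 (by omega)) (nCg p2 (by omega))
          have s4 : sigmaC l i (z + 2) = z + 1 := (sig_down' hi (Or.inr (p2.tr (0) (by ring)))).trans (by ring)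
          have s5 : sigmaC l j (z + 1) = z := (sig_down' hj (Or.inr (p1.tr (0) (by ring)))).trans (by ring)
          have s6 : sigmaC l i (z) = z := sig_fix' hi (nCg p0 (by omega)) (nCg p0 (by omega)) (nCg p0 (by omega)) (nCg p0 (by omega))
          rw [s1, s2, s3, s4, s5, s6]
        ·
          by_cases hE : Cg l z (-I)
          · have p0 : Cg l (z) (-I) := hE.tr 0 (by ring)
            have pm1 : Cg l (z - 1) (-I - 1) := hE.tr 0 (by ring)
            have p1 : Cg l (z + 1) (-I + 1) := hE.tr 0 (by ring)
            have s1 : sigmaC l j (z) = z - 1 := (sig_down' hj (Or.inr (p0.tr (0) (by ring)))).trans (by ring)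
            have s2 : sigmaC l i (z - 1) = z - 1 := sig_fix' hi (nCg pm1 (by omega)) (nCg pm1 (by omega)) (nCg pm1 (by omega)) (nCg pm1 (by omega))
            have s3 : sigmaC l j (z - 1) = z := (sig_up' hj (Or.inr (pm1.tr (0) (by ring)))).trans (by ring)
            have s4 : sigmaC l i (z) = z + 1 := (sig_up' hi (Or.inr (p0.tr (0) (by ring)))).trans (by ring)
            have s5 : sigmaC l j (z + 1) = z + 1 := sig_fix' hj (nCg p1 (by omega)) (nCg p1 (by omega)) (nCg p1 (by omega)) (nCg p1 (by omega))
            have s6 : sigmaC l i (z + 1) = z := (sig_down' hi (Or.inr (p1.tr (0) (by ring)))).trans (by ring)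
            rw [s1, s2, s3, s4, s5, s6]
          ·
            by_cases hF : Cg l z (-I + 1)
            · have p0 : Cg l (z) (-I + 1) := hF.tr 0 (by ring)
              have pm1 : Cg l (z - 1) (-I) := hF.tr 0 (by ring)
              have pm2 : Cg l (z - 2) (-I - 1) := hF.tr 0 (by ring)
              have s1 : sigmaC l j (z) = z := sig_fix' hj (nCg p0 (by omega)) (nCg p0 (by omega)) (nCg p0 (by omega)) (nCg p0 (by omega))
              have s2 : sigmaC l i (z) = z - 1 := (sig_down' hi (Or.inr (p0.tr (0) (by ring)))).trans (by ring)
              have s3 : sigmaC l j (z - 1) = z - 2 := (sig_down' hj (Or.inr (pm1.tr (0) (by ring)))).trans (by ring)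
              have s4 : sigmaC l i (z - 2) = z - 2 := sig_fix' hi (nCg pm2 (by omega)) (nCg pm2 (by omega)) (nCg pm2 (by omega)) (nCg pm2 (by omega))
              have s5 : sigmaC l j (z - 2) = z - 1 := (sig_up' hj (Or.inr (pm2.tr (0) (by ring)))).trans (by ring)
              have s6 : sigmaC l i (z - 1) = z := (sig_up' hi (Or.inr (pm1.tr (0) (by ring)))).trans (by ring)
              rw [s1, s2, s3, s4, s5, s6]
            · have fi : sigmaC l i z = z := sig_fix' hi (fun h => hA (h.tr (0) (by ring))) (fun h => hE (h.tr (0) (by ring))) (fun h => hB (h.tr (0) (by ring))) (fun h => hF (h.tr (0) (by ring)))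
              have fj : sigmaC l j z = z := sig_fix' hj (fun h => hB (h.tr (0) (by ring))) (fun h => hD (h.tr (0) (by ring))) (fun h => hC (h.tr (0) (by ring))) (fun h => hE (h.tr (0) (by ring)))
              simp only [fi, fj]

lemma rel2_pt (hl : 2 ≤ l) (I J : ℤ) (hi : ((i:ℕ):ℤ) = I) (hj : ((j:ℕ):ℤ) = J)
    (hI0 : 0 ≤ I) (hIl : I ≤ (l:ℤ)) (hJ0 : 0 ≤ J) (hJl : J ≤ (l:ℤ))
    (hne : I ≠ J) (hadj1 : J ≠ I + 1) (hadj2 : I ≠ J + 1)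
    (hsum2 : 2 ≤ I + J) (hsum : I + J ≤ 2*(l:ℤ) - 2) (z : ℤ) :
    sigmaC l i (sigmaC l j (sigmaC l i (sigmaC l j (z)))) = z := by
  have hL : (2:ℤ) ≤ (l:ℤ) := by exact_mod_cast hl
  by_cases hA1 : Cg l z (I)
  · have p0 : Cg l (z) (I) := hA1.tr 0 (by ring)
    have p1 : Cg l (z + 1) (I + 1) := hA1.tr 0 (by ring)
    have s1 : sigmaC l j (z) = z := sig_fix' hj (nCg p0 (by omega)) (nCg p0 (by omega)) (nCg p0 (by omega)) (nCg p0 (by omega))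
    have s2 : sigmaC l i (z) = z + 1 := (sig_up' hi (Or.inl (p0.tr (0) (by ring)))).trans (by ring)
    have s3 : sigmaC l j (z + 1) = z + 1 := sig_fix' hj (nCg p1 (by omega)) (nCg p1 (by omega)) (nCg p1 (by omega)) (nCg p1 (by omega))
    have s4 : sigmaC l i (z + 1) = z := (sig_down' hi (Or.inl (p1.tr (0) (by ring)))).trans (by ring)
    rw [s1, s2, s3, s4]
  ·
    by_cases hA2 : Cg l z (-I)
    · have p0 : Cg l (z) (-I) := hA2.tr 0 (by ring)
      have p1 : Cg l (z + 1) (-I + 1) := hA2.tr 0 (by ring)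
      have s1 : sigmaC l j (z) = z := sig_fix' hj (nCg p0 (by omega)) (nCg p0 (by omega)) (nCg p0 (by omega)) (nCg p0 (by omega))
      have s2 : sigmaC l i (z) = z + 1 := (sig_up' hi (Or.inr (p0.tr (0) (by ring)))).trans (by ring)
      have s3 : sigmaC l j (z + 1) = z + 1 := sig_fix' hj (nCg p1 (by omega)) (nCg p1 (by omega)) (nCg p1 (by omega)) (nCg p1 (by omega))
      have s4 : sigmaC l i (z + 1) = z := (sig_down' hi (Or.inr (p1.tr (0) (by ring)))).trans (by ring)
      rw [s1, s2, s3, s4]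
    ·
      by_cases hA3 : Cg l z (I + 1)
      · have p0 : Cg l (z) (I + 1) := hA3.tr 0 (by ring)
        have pm1 : Cg l (z - 1) (I) := hA3.tr 0 (by ring)
        have s1 : sigmaC l j (z) = z := sig_fix' hj (nCg p0 (by omega)) (nCg p0 (by omega)) (nCg p0 (by omega)) (nCg p0 (by omega))
        have s2 : sigmaC l i (z) = z - 1 := (sig_down' hi (Or.inl (p0.tr (0) (by ring)))).trans (by ring)
        have s3 : sigmaC l j (z - 1) = z - 1 := sig_fix' hj (nCg pm1 (by omega)) (nCg pm1 (by omega)) (nCg pm1 (by omega)) (nCg pm1 (by omega))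
        have s4 : sigmaC l i (z - 1) = z := (sig_up' hi (Or.inl (pm1.tr (0) (by ring)))).trans (by ring)
        rw [s1, s2, s3, s4]
      ·
        by_cases hA4 : Cg l z (-I + 1)
        · have p0 : Cg l (z) (-I + 1) := hA4.tr 0 (by ring)
          have pm1 : Cg l (z - 1) (-I) := hA4.tr 0 (by ring)
          have s1 : sigmaC l j (z) = z := sig_fix' hj (nCg p0 (by omega)) (nCg p0 (by omega)) (nCg p0 (by omega)) (nCg p0 (by omega))
          have s2 : sigmaC l i (z) = z - 1 := (sig_down' hi (Or.inr (p0.tr (0) (by ring)))).trans (by ring)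
          have s3 : sigmaC l j (z - 1) = z - 1 := sig_fix' hj (nCg pm1 (by omega)) (nCg pm1 (by omega)) (nCg pm1 (by omega)) (nCg pm1 (by omega))
          have s4 : sigmaC l i (z - 1) = z := (sig_up' hi (Or.inr (pm1.tr (0) (by ring)))).trans (by ring)
          rw [s1, s2, s3, s4]
        ·
          by_cases hB1 : Cg l z (J)
          · have p0 : Cg l (z) (J) := hB1.tr 0 (by ring)
            have p1 : Cg l (z + 1) (J + 1) := hB1.tr 0 (by ring)
            have s1 : sigmaC l j (z) = z + 1 := (sig_up' hj (Or.inl (p0.tr (0) (by ring)))).trans (by ring)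
            have s2 : sigmaC l i (z + 1) = z + 1 := sig_fix' hi (nCg p1 (by omega)) (nCg p1 (by omega)) (nCg p1 (by omega)) (nCg p1 (by omega))
            have s3 : sigmaC l j (z + 1) = z := (sig_down' hj (Or.inl (p1.tr (0) (by ring)))).trans (by ring)
            have s4 : sigmaC l i (z) = z := sig_fix' hi (nCg p0 (by omega)) (nCg p0 (by omega)) (nCg p0 (by omega)) (nCg p0 (by omega))
            rw [s1, s2, s3, s4]
          ·
            by_cases hB2 : Cg l z (-J)
            · have p0 : Cg l (z) (-J) := hB2.tr 0 (by ring)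
              have p1 : Cg l (z + 1) (-J + 1) := hB2.tr 0 (by ring)
              have s1 : sigmaC l j (z) = z + 1 := (sig_up' hj (Or.inr (p0.tr (0) (by ring)))).trans (by ring)
              have s2 : sigmaC l i (z + 1) = z + 1 := sig_fix' hi (nCg p1 (by omega)) (nCg p1 (by omega)) (nCg p1 (by omega)) (nCg p1 (by omega))
              have s3 : sigmaC l j (z + 1) = z := (sig_down' hj (Or.inr (p1.tr (0) (by ring)))).trans (by ring)
              have s4 : sigmaC l i (z) = z := sig_fix' hi (nCg p0 (by omega)) (nCg p0 (by omega)) (nCg p0 (by omega)) (nCg p0 (by omega))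
              rw [s1, s2, s3, s4]
            ·
              by_cases hB3 : Cg l z (J + 1)
              · have p0 : Cg l (z) (J + 1) := hB3.tr 0 (by ring)
                have pm1 : Cg l (z - 1) (J) := hB3.tr 0 (by ring)
                have s1 : sigmaC l j (z) = z - 1 := (sig_down' hj (Or.inl (p0.tr (0) (by ring)))).trans (by ring)
                have s2 : sigmaC l i (z - 1) = z - 1 := sig_fix' hi (nCg pm1 (by omega)) (nCg pm1 (by omega)) (nCg pm1 (by omega)) (nCg pm1 (by omega))
                have s3 : sigmaC l j (z - 1) = z := (sig_up' hj (Or.inl (pm1.tr (0) (by ring)))).trans (by ring)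
                have s4 : sigmaC l i (z) = z := sig_fix' hi (nCg p0 (by omega)) (nCg p0 (by omega)) (nCg p0 (by omega)) (nCg p0 (by omega))
                rw [s1, s2, s3, s4]
              ·
                by_cases hB4 : Cg l z (-J + 1)
                · have p0 : Cg l (z) (-J + 1) := hB4.tr 0 (by ring)
                  have pm1 : Cg l (z - 1) (-J) := hB4.tr 0 (by ring)
                  have s1 : sigmaC l j (z) = z - 1 := (sig_down' hj (Or.inr (p0.tr (0) (by ring)))).trans (by ring)
                  have s2 : sigmaC l i (z - 1) = z - 1 := sig_fix' hi (nCg pm1 (by omega)) (nCg pm1 (by omega)) (nCg pm1 (by omega)) (nCg pm1 (by omega))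
                  have s3 : sigmaC l j (z - 1) = z := (sig_up' hj (Or.inr (pm1.tr (0) (by ring)))).trans (by ring)
                  have s4 : sigmaC l i (z) = z := sig_fix' hi (nCg p0 (by omega)) (nCg p0 (by omega)) (nCg p0 (by omega)) (nCg p0 (by omega))
                  rw [s1, s2, s3, s4]
                · have fi : sigmaC l i z = z := sig_fix' hi (fun h => hA1 (h.tr (0) (by ring))) (fun h => hA2 (h.tr (0) (by ring))) (fun h => hA3 (h.tr (0) (by ring))) (fun h => hA4 (h.tr (0) (by ring)))
                  have fj : sigmaC l j z = z := sig_fix' hj (fun h => hB1 (h.tr (0) (by ring))) (fun h => hB2 (h.tr (0) (by ring))) (fun h => hB3 (h.tr (0) (by ring))) (fun h => hB4 (h.tr (0) (by ring)))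
                  simp only [fi, fj]

end Rels


/-! ### The permutations satisfy the Coxeter relations -/

lemma swap_pow_eq_one {G : Type*} [Group G] {a b : G} {m : ℕ} (h : (a*b)^m = 1) :
    (b*a)^m = 1 := by
  have e : b * a = a⁻¹ * (a * b) * a⁻¹⁻¹ := by group
  rw [e, conj_pow, h]
  group

lemma pow4_eq_one {l : ℕ} {i j : Fin (l+1)}
    (h : ∀ z, sigmaC l i (sigmaC l j (sigmaC l i (sigmaC l j
      (sigmaC l i (sigmaC l j (sigmaC l i (sigmaC l j z))))))) = z) :
    (sigP l i * sigP l j)^4 = 1 := by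
  ext z
  have e : ((sigP l i * sigP l j)^4) z
      = sigmaC l i (sigmaC l j (sigmaC l i (sigmaC l j
        (sigmaC l i (sigmaC l j (sigmaC l i (sigmaC l j z))))))) := by
    simp [pow_succ, Equiv.Perm.mul_apply]
  rw [e, h z]
  rfl

lemma pow3_eq_one {l : ℕ} {i j : Fin (l+1)}
    (h : ∀ z, sigmaC l i (sigmaC l j (sigmaC l i (sigmaC l j
      (sigmaC l i (sigmaC l j z))))) = z) :
    (sigP l i * sigP l j)^3 = 1 := by
  ext z
  have e : ((sigP l i * sigP l j)^3) z
      = sigmaC l i (sigmaC l j (sigmaC l i (sigmaC l j (sigmaC l i (sigmaC l j z))))) := by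
    simp [pow_succ, Equiv.Perm.mul_apply]
  rw [e, h z]
  rfl

lemma pow2_eq_one {l : ℕ} {i j : Fin (l+1)}
    (h : ∀ z, sigmaC l i (sigmaC l j (sigmaC l i (sigmaC l j z))) = z) :
    (sigP l i * sigP l j)^2 = 1 := by
  ext z
  have e : ((sigP l i * sigP l j)^2) z = sigmaC l i (sigmaC l j (sigmaC l i (sigmaC l j z))) := by
    simp [pow_succ, Equiv.Perm.mul_apply]
  rw [e, h z]
  rfl

lemma sigP_liftable {l : ℕ} (hl : 2 ≤ l) (i j : Fin (l+1)) :
    (sigP l i * sigP l j) ^ (coxMatC l i j) = 1 := by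
  unfold coxMatC
  by_cases hij : i = j
  · subst hij
    rw [if_pos rfl, pow_one, sigP_sq]
  rw [if_neg hij]
  have hvne : (i:ℕ) ≠ (j:ℕ) := fun h => hij (Fin.val_injective h)
  have hi_le : (i:ℕ) ≤ l := Nat.lt_succ_iff.mp i.isLt
  have hj_le : (j:ℕ) ≤ l := Nat.lt_succ_iff.mp j.isLt
  by_cases h4 : ((i : ℕ) = 0 ∧ (j : ℕ) = 1) ∨ ((i : ℕ) = 1 ∧ (j : ℕ) = 0) ∨
      ((i : ℕ) = l - 1 ∧ (j : ℕ) = l) ∨ ((i : ℕ) = l ∧ (j : ℕ) = l - 1)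
  · rw [if_pos h4]
    rcases h4 with ⟨h1, h2⟩ | ⟨h1, h2⟩ | ⟨h1, h2⟩ | ⟨h1, h2⟩
    · exact pow4_eq_one (rel4a_pt hl (by exact_mod_cast h1) (by exact_mod_cast h2))
    · exact swap_pow_eq_one (pow4_eq_one (rel4a_pt hl
        (by exact_mod_cast h2) (by exact_mod_cast h1)))
    · exact pow4_eq_one (rel4b_pt hl (by omega) (by exact_mod_cast h2))
    · exact swap_pow_eq_one (pow4_eq_one (rel4b_pt hl (by omega) (by exact_mod_cast h1)))
  · rw [if_neg h4]
    push_neg at h4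
    obtain ⟨h41, h42, h43, h44⟩ := h4
    by_cases h3 : (i : ℕ) + 1 = (j : ℕ) ∨ (j : ℕ) + 1 = (i : ℕ)
    · rw [if_pos h3]
      rcases h3 with h3 | h3
      · exact pow3_eq_one (rel3_pt hl ((i:ℕ):ℤ) rfl (by omega) (by omega) (by omega))
      · exact swap_pow_eq_one (pow3_eq_one (rel3_pt hl ((j:ℕ):ℤ) rfl (by omega)
          (by omega) (by omega)))
    · rw [if_neg h3]
      push_neg at h3
      exact pow2_eq_one (rel2_pt hl ((i:ℕ):ℤ) ((j:ℕ):ℤ) rfl rfl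
        (by omega) (by omega) (by omega) (by omega)
        (by omega) (by omega) (by omega) (by omega) (by omega))


/-! ### Coxeter system structure -/

lemma coxMatC_symm (l : ℕ) (i j : Fin (l+1)) : coxMatC l i j = coxMatC l j i := by
  unfold coxMatC
  rcases eq_or_ne i j with rfl | h
  · rfl
  · rw [if_neg h, if_neg h.symm]
    have e4 : (((i : ℕ) = 0 ∧ (j : ℕ) = 1) ∨ ((i : ℕ) = 1 ∧ (j : ℕ) = 0) ∨
          ((i : ℕ) = l - 1 ∧ (j : ℕ) = l) ∨ ((i : ℕ) = l ∧ (j : ℕ) = l - 1)) ↔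
        (((j : ℕ) = 0 ∧ (i : ℕ) = 1) ∨ ((j : ℕ) = 1 ∧ (i : ℕ) = 0) ∨
          ((j : ℕ) = l - 1 ∧ (i : ℕ) = l) ∨ ((j : ℕ) = l ∧ (i : ℕ) = l - 1)) := by tauto
    have e3 : ((i : ℕ) + 1 = (j : ℕ) ∨ (j : ℕ) + 1 = (i : ℕ)) ↔
        ((j : ℕ) + 1 = (i : ℕ) ∨ (i : ℕ) + 1 = (j : ℕ)) := by tauto
    rw [if_congr e4 rfl (if_congr e3 rfl rfl)]

/-- The Coxeter matrix of type `C̃_l`. -/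
def CM (l : ℕ) : CoxeterMatrix (Fin (l+1)) where
  M := Matrix.of (coxMatC l)
  isSymm := by
    unfold Matrix.IsSymm
    ext i j
    exact coxMatC_symm l j i
  diagonal i := by simp [Matrix.of_apply, coxMatC]
  off_diagonal i j h := by
    simp only [Matrix.of_apply]
    unfold coxMatC
    rw [if_neg h]
    split_ifs <;> omega

lemma CM_apply (l : ℕ) (i j : Fin (l+1)) : (CM l) i j = coxMatC l i j := rfl

lemma relsEq (l : ℕ) : coxRels (coxMatC l) = (CM l).relationsSet := by
  ext r
  constructor
  · rintro ⟨i, j, rfl⟩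
    exact ⟨(i, j), rfl⟩
  · rintro ⟨⟨i, j⟩, rfl⟩
    exact ⟨i, j, rfl⟩

/-- Transport of presented groups along an equality of relation sets. -/
def relCast {B : Type*} {S T : Set (FreeGroup B)} (h : S = T) :
    PresentedGroup S ≃* PresentedGroup T := by subst h; exact MulEquiv.refl _

lemma relCast_of {B : Type*} {S T : Set (FreeGroup B)} (h : S = T) (b : B) :
    relCast h (PresentedGroup.of b) = PresentedGroup.of b := by subst h; rfl

lemma relCast_symm_of {B : Type*} {S T : Set (FreeGroup B)} (h : S = T) (b : B) :
    (relCast h).symm (PresentedGroup.of b) = PresentedGroup.of b := by subst h; rfl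

/-- The Coxeter system on our presented group. -/
def csC (l : ℕ) : CoxeterSystem (CM l) (PresentedGroup (coxRels (coxMatC l))) :=
  ⟨relCast (relsEq l)⟩

lemma csC_simple (l : ℕ) (i : Fin (l+1)) : (csC l).simple i = PresentedGroup.of i := by
  unfold CoxeterSystem.simple csC
  exact relCast_symm_of _ i


/-! ### Existence and uniqueness of the representation -/

abbrev W (l : ℕ) := PresentedGroup (coxRels (coxMatC l))

lemma isLiftable (l : ℕ) (hl : 2 ≤ l) : CoxeterMatrix.IsLiftable (CM l) (fun j => sigP l j) :=
  fun i j => sigP_liftable hl i j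

noncomputable def rho0 (l : ℕ) (hl : 2 ≤ l) : W l →* Equiv.Perm ℤ :=
  (csC l).lift ⟨fun j => sigP l j, isLiftable l hl⟩

lemma rho0_of (l : ℕ) (hl : 2 ≤ l) (j : Fin (l+1)) :
    rho0 l hl (PresentedGroup.of j) = sigP l j := by
  rw [← csC_simple l j]
  exact (csC l).lift_apply_simple (isLiftable l hl) j

lemma rho_eq_rho0 (l : ℕ) (hl : 2 ≤ l) (ρ : W l →* Equiv.Perm ℤ)
    (hρ : ∀ (j : Fin (l + 1)) (z : ℤ), ρ (PresentedGroup.of j) z = sigmaC l j z) :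
    ρ = rho0 l hl := by
  apply (csC l).ext_simple
  intro i
  rw [csC_simple, rho0_of]
  ext z
  exact hρ i z

lemma rho_of_eq (l : ℕ) (hl : 2 ≤ l) (ρ : W l →* Equiv.Perm ℤ)
    (hρ : ∀ (j : Fin (l + 1)) (z : ℤ), ρ (PresentedGroup.of j) z = sigmaC l j z)
    (j : Fin (l+1)) : ρ ((csC l).simple j) = sigP l j := by
  rw [csC_simple]
  ext z
  exact hρ j z

/-! ### Infrastructure for faithfulness -/

/-- Action of a word on `ℤ` through the `σ`'s. -/
def sw (l : ℕ) : List (Fin (l+1)) → ℤ → ℤ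
  | [], z => z
  | (c :: cs), z => sigmaC l c (sw l cs z)

@[simp] lemma sw_nil (l : ℕ) (z : ℤ) : sw l [] z = z := rfl

@[simp] lemma sw_cons (l : ℕ) (c : Fin (l+1)) (cs : List (Fin (l+1))) (z : ℤ) :
    sw l (c :: cs) z = sigmaC l c (sw l cs z) := rfl

section Faithful

variable {l : ℕ} (hl : 2 ≤ l) (ρ : W l →* Equiv.Perm ℤ)
  (hρ : ∀ (j : Fin (l + 1)) (z : ℤ), ρ (PresentedGroup.of j) z = sigmaC l j z)

include hρ

lemma rho_simple (j : Fin (l+1)) : ρ ((csC l).simple j) = sigP l j := by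
  rw [csC_simple]
  ext z
  exact hρ j z

lemma rho_wordProd (ω : List (Fin (l+1))) (z : ℤ) :
    ρ ((csC l).wordProd ω) z = sw l ω z := by
  induction ω generalizing z with
  | nil => simp [CoxeterSystem.wordProd_nil]
  | cons c cs ih =>
    rw [CoxeterSystem.wordProd_cons, map_mul, Equiv.Perm.mul_apply, rho_simple ρ hρ, sw_cons,
      sigP_apply, ih]

lemma rho_shift (w : W l) (z : ℤ) : ρ w (z + 2*(l:ℤ)) = ρ w z + 2*(l:ℤ) := by
  induction w using CoxeterSystem.simple_induction (cs := csC l) generalizing z with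
  | simple i => rw [rho_simple ρ hρ]; exact sig_shift i z
  | one => simp
  | mul w w' ih ih' => rw [map_mul, Equiv.Perm.mul_apply, Equiv.Perm.mul_apply, ih', ih]

lemma rho_mirror (w : W l) (z : ℤ) : ρ w (1 - z) = 1 - ρ w z := by
  induction w using CoxeterSystem.simple_induction (cs := csC l) generalizing z with
  | simple i => rw [rho_simple ρ hρ]; exact sig_mirror i z
  | one => simp
  | mul w w' ih ih' => rw [map_mul, Equiv.Perm.mul_apply, Equiv.Perm.mul_apply, ih', ih]

end Faithful

/-- Positivity (ascent) of a function at a pair `(c, c+1)`. -/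
def PosF (g : ℤ → ℤ) (c : ℤ) : Prop := g c < g (c + 1)

open CoxeterSystem in
lemma dih3 {l : ℕ} (hl : 2 ≤ l) {i j : Fin (l+1)} (I : ℤ)
    (hi : ((i:ℕ):ℤ) = I) (hj : ((j:ℕ):ℤ) = I + 1)
    (hI1 : 1 ≤ I) (hI2 : I ≤ (l:ℤ) - 2) (g : ℤ → ℤ)
    (hp1 : g I < g (I+1)) (hp2 : g (I+1) < g (I+2)) (q : ℕ) (hq : q + 1 ≤ 3) :
    PosF (fun z => g (sw l (alternatingWord i j q) z)) ((i:ℕ):ℤ) ∧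
    PosF (fun z => g (sw l (alternatingWord j i q) z)) ((j:ℕ):ℤ) := by
  have hL : (2:ℤ) ≤ (l:ℤ) := by exact_mod_cast hl
  -- point evaluations
  have eiI : sigmaC l i I = I + 1 := (sig_up' hi (Or.inl ((Cg.refl l I).tr 0 (by ring)))).trans (by ring)
  have eiI1 : sigmaC l i (I+1) = I := (sig_down' hi (Or.inl ((Cg.refl l (I+1)).tr 0 (by ring)))).trans (by ring)
  have eiI2 : sigmaC l i (I+2) = I + 2 := sig_fix' hi (nCg (Cg.refl l (I+2)) (by omega))
    (nCg (Cg.refl l (I+2)) (by omega)) (nCg (Cg.refl l (I+2)) (by omega)) (nCg (Cg.refl l (I+2)) (by omega))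
  have ejI : sigmaC l j I = I := sig_fix' hj (nCg (Cg.refl l I) (by omega))
    (nCg (Cg.refl l I) (by omega)) (nCg (Cg.refl l I) (by omega)) (nCg (Cg.refl l I) (by omega))
  have ejI1 : sigmaC l j (I+1) = I + 2 := (sig_up' hj (Or.inl ((Cg.refl l (I+1)).tr 0 (by ring)))).trans (by ring)
  have ejI2 : sigmaC l j (I+2) = I + 1 := (sig_down' hj (Or.inl ((Cg.refl l (I+2)).tr 0 (by ring)))).trans (by ring)
  have hq' : q ≤ 2 := by omega
  interval_cases q
  · constructor
    · simp only [PosF, sw_nil, hi]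
      exact hp1
    · simp only [PosF, sw_nil, hj]
      have e : I + 1 + 1 = I + 2 := by ring
      rw [e]
      exact hp2
  · constructor
    · have ew : alternatingWord i j 1 = [j] := rfl
      simp only [PosF, ew, sw_cons, sw_nil, hi]
      rw [ejI, ejI1]
      linarith
    · have ew : alternatingWord j i 1 = [i] := rfl
      simp only [PosF, ew, sw_cons, sw_nil, hj]
      have e : I + 1 + 1 = I + 2 := by ring
      rw [e, eiI1, eiI2]
      linarith
  · constructor
    · have ew : alternatingWord i j 2 = [i, j] := rfl
      simp only [PosF, ew, sw_cons, sw_nil, hi]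
      rw [ejI, ejI1, eiI, eiI2]
      linarith
    · have ew : alternatingWord j i 2 = [j, i] := rfl
      simp only [PosF, ew, sw_cons, sw_nil, hj]
      have e : I + 1 + 1 = I + 2 := by ring
      rw [e, eiI1, eiI2, ejI, ejI2]
      linarith

open CoxeterSystem in
lemma dih4a {l : ℕ} (hl : 2 ≤ l) {i j : Fin (l+1)}
    (hi : ((i:ℕ):ℤ) = 0) (hj : ((j:ℕ):ℤ) = 1) (g : ℤ → ℤ)
    (hmi : ∀ z, g (1 - z) = 1 - g z)
    (hp1 : g 0 < g 1) (hp2 : g 1 < g 2) (q : ℕ) (hq : q + 1 ≤ 4) :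
    PosF (fun z => g (sw l (alternatingWord i j q) z)) ((i:ℕ):ℤ) ∧
    PosF (fun z => g (sw l (alternatingWord j i q) z)) ((j:ℕ):ℤ) := by
  have hL : (2:ℤ) ≤ (l:ℤ) := by exact_mod_cast hl
  have g0 : g 0 = 1 - g 1 := by have := hmi 1; norm_num at this; exact this
  have gm2 : g (-1) = 1 - g 2 := by have := hmi 2; norm_num at this; exact this
  have ei0 : sigmaC l i (0:ℤ) = 1 := (sig_up' hi (Or.inl ((Cg.refl l 0).tr 0 (by ring)))).trans (by norm_num)
  have ei1 : sigmaC l i (1:ℤ) = 0 := (sig_down' hi (Or.inl ((Cg.refl l 1).tr 0 (by ring)))).trans (by norm_num)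
  have eim1 : sigmaC l i (-1:ℤ) = -1 := sig_fix' hi (nCg (Cg.refl l (-1)) (by omega))
    (nCg (Cg.refl l (-1)) (by omega)) (nCg (Cg.refl l (-1)) (by omega)) (nCg (Cg.refl l (-1)) (by omega))
  have ei2 : sigmaC l i (2:ℤ) = 2 := sig_fix' hi (nCg (Cg.refl l 2) (by omega))
    (nCg (Cg.refl l 2) (by omega)) (nCg (Cg.refl l 2) (by omega)) (nCg (Cg.refl l 2) (by omega))
  have ej1 : sigmaC l j (1:ℤ) = 2 := (sig_up' hj (Or.inl ((Cg.refl l 1).tr 0 (by ring)))).trans (by norm_num)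
  have ej0 : sigmaC l j (0:ℤ) = -1 := (sig_down' hj (Or.inr ((Cg.refl l 0).tr 0 (by ring)))).trans (by norm_num)
  have ejm1 : sigmaC l j (-1:ℤ) = 0 := (sig_up' hj (Or.inr ((Cg.refl l (-1)).tr 0 (by ring)))).trans (by norm_num)
  have ej2 : sigmaC l j (2:ℤ) = 1 := (sig_down' hj (Or.inl ((Cg.refl l 2).tr 0 (by ring)))).trans (by norm_num)
  have e01 : (0:ℤ) + 1 = 1 := by norm_num
  have e12 : (1:ℤ) + 1 = 2 := by norm_num
  have hq' : q ≤ 3 := by omega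
  interval_cases q
  · exact ⟨by simp only [PosF, sw_nil, hi]; rw [e01]; exact hp1,
      by simp only [PosF, sw_nil, hj]; rw [e12]; exact hp2⟩
  · constructor
    · have ew : alternatingWord i j 1 = [j] := rfl
      simp only [PosF, ew, sw_cons, sw_nil, hi]
      rw [e01, ej0, ej1]; linarith
    · have ew : alternatingWord j i 1 = [i] := rfl
      simp only [PosF, ew, sw_cons, sw_nil, hj]
      rw [e12, ei1, ei2]; linarith
  · constructor
    · have ew : alternatingWord i j 2 = [i, j] := rfl
      simp only [PosF, ew, sw_cons, sw_nil, hi]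
      rw [e01, ej0, ej1, eim1, ei2]; linarith
    · have ew : alternatingWord j i 2 = [j, i] := rfl
      simp only [PosF, ew, sw_cons, sw_nil, hj]
      rw [e12, ei1, ei2, ej0, ej2]; linarith
  · constructor
    · have ew : alternatingWord i j 3 = [j, i, j] := rfl
      simp only [PosF, ew, sw_cons, sw_nil, hi]
      rw [e01, ej0, ej1, eim1, ei2, ejm1, ej2]; linarith
    · have ew : alternatingWord j i 3 = [i, j, i] := rfl
      simp only [PosF, ew, sw_cons, sw_nil, hj]
      rw [e12, ei1, ei2, ej0, ej2, eim1, ei1]; linarith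

open CoxeterSystem in
lemma dih4b {l : ℕ} (hl : 2 ≤ l) {i j : Fin (l+1)}
    (hi : ((i:ℕ):ℤ) = (l:ℤ) - 1) (hj : ((j:ℕ):ℤ) = (l:ℤ)) (g : ℤ → ℤ)
    (hmi : ∀ z, g (1 - z) = 1 - g z) (hsh : ∀ z, g (z + 2*(l:ℤ)) = g z + 2*(l:ℤ))
    (hp1 : g ((l:ℤ)-1) < g (l:ℤ)) (hp2 : g (l:ℤ) < g ((l:ℤ)+1)) (q : ℕ) (hq : q + 1 ≤ 4) :
    PosF (fun z => g (sw l (alternatingWord i j q) z)) ((i:ℕ):ℤ) ∧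
    PosF (fun z => g (sw l (alternatingWord j i q) z)) ((j:ℕ):ℤ) := by
  have hL : (2:ℤ) ≤ (l:ℤ) := by exact_mod_cast hl
  have gm : ∀ z, g (1 - z + 2*(l:ℤ)) = 1 - g z + 2*(l:ℤ) := fun z => by rw [hsh, hmi]
  have gC : g ((l:ℤ)+1) = 2*(l:ℤ)+1 - g (l:ℤ) := by
    have := gm (l:ℤ)
    have e : 1 - (l:ℤ) + 2*(l:ℤ) = (l:ℤ)+1 := by ring
    rw [e] at this; linarith
  have gD : g ((l:ℤ)+2) = 2*(l:ℤ)+1 - g ((l:ℤ)-1) := by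
    have := gm ((l:ℤ)-1)
    have e : 1 - ((l:ℤ)-1) + 2*(l:ℤ) = (l:ℤ)+2 := by ring
    rw [e] at this; linarith
  have eiA : sigmaC l i ((l:ℤ)-1) = (l:ℤ) :=
    (sig_up' hi (Or.inl ((Cg.refl l ((l:ℤ)-1)).tr 0 (by ring)))).trans (by ring)
  have eiB : sigmaC l i ((l:ℤ)) = (l:ℤ)-1 :=
    (sig_down' hi (Or.inl ((Cg.refl l ((l:ℤ))).tr 0 (by ring)))).trans (by ring)
  have eiC : sigmaC l i ((l:ℤ)+1) = (l:ℤ)+2 :=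
    (sig_up' hi (Or.inr ((Cg.refl l ((l:ℤ)+1)).tr 1 (by ring)))).trans (by ring)
  have eiD : sigmaC l i ((l:ℤ)+2) = (l:ℤ)+1 :=
    (sig_down' hi (Or.inr ((Cg.refl l ((l:ℤ)+2)).tr 1 (by ring)))).trans (by ring)
  have ejA : sigmaC l j ((l:ℤ)-1) = (l:ℤ)-1 := sig_fix' hj
    (nCg (Cg.refl l ((l:ℤ)-1)) (by omega)) (nCg (Cg.refl l ((l:ℤ)-1)) (by omega))
    (nCg (Cg.refl l ((l:ℤ)-1)) (by omega)) (nCg (Cg.refl l ((l:ℤ)-1)) (by omega))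
  have ejB : sigmaC l j ((l:ℤ)) = (l:ℤ)+1 :=
    (sig_up' hj (Or.inl ((Cg.refl l ((l:ℤ))).tr 0 (by ring)))).trans (by ring)
  have ejC : sigmaC l j ((l:ℤ)+1) = (l:ℤ) :=
    (sig_down' hj (Or.inl ((Cg.refl l ((l:ℤ)+1)).tr 0 (by ring)))).trans (by ring)
  have ejD : sigmaC l j ((l:ℤ)+2) = (l:ℤ)+2 := sig_fix' hj
    (nCg (Cg.refl l ((l:ℤ)+2)) (by omega)) (nCg (Cg.refl l ((l:ℤ)+2)) (by omega))
    (nCg (Cg.refl l ((l:ℤ)+2)) (by omega)) (nCg (Cg.refl l ((l:ℤ)+2)) (by omega))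
  have eA : (l:ℤ) - 1 + 1 = (l:ℤ) := by ring
  have hq' : q ≤ 3 := by omega
  interval_cases q
  · exact ⟨by simp only [PosF, sw_nil, hi]; rw [eA]; exact hp1,
      by simp only [PosF, sw_nil, hj]; exact hp2⟩
  · constructor
    · have ew : alternatingWord i j 1 = [j] := rfl
      simp only [PosF, ew, sw_cons, sw_nil, hi]
      rw [eA, ejA, ejB]; linarith
    · have ew : alternatingWord j i 1 = [i] := rfl
      simp only [PosF, ew, sw_cons, sw_nil, hj]
      rw [eiB, eiC]; linarith
  · constructor
    · have ew : alternatingWord i j 2 = [i, j] := rfl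
      simp only [PosF, ew, sw_cons, sw_nil, hi]
      rw [eA, ejA, ejB, eiA, eiC]; linarith
    · have ew : alternatingWord j i 2 = [j, i] := rfl
      simp only [PosF, ew, sw_cons, sw_nil, hj]
      rw [eiB, eiC, ejA, ejD]; linarith
  · constructor
    · have ew : alternatingWord i j 3 = [j, i, j] := rfl
      simp only [PosF, ew, sw_cons, sw_nil, hi]
      rw [eA, ejA, ejB, eiA, eiC, ejB, ejD]; linarith
    · have ew : alternatingWord j i 3 = [i, j, i] := rfl
      simp only [PosF, ew, sw_cons, sw_nil, hj]
      rw [eiB, eiC, ejA, ejD, eiA, eiD]; linarith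

open CoxeterSystem in
lemma dih2 {l : ℕ} (hl : 2 ≤ l) {i j : Fin (l+1)} (I J : ℤ)
    (hi : ((i:ℕ):ℤ) = I) (hj : ((j:ℕ):ℤ) = J)
    (hI0 : 0 ≤ I) (hIl : I ≤ (l:ℤ)) (hJ0 : 0 ≤ J) (hJl : J ≤ (l:ℤ))
    (hne : I ≠ J) (hadj1 : J ≠ I + 1) (hadj2 : I ≠ J + 1)
    (hsum2 : 2 ≤ I + J) (hsum : I + J ≤ 2*(l:ℤ) - 2) (g : ℤ → ℤ)
    (hp1 : g I < g (I+1)) (hp2 : g J < g (J+1)) (q : ℕ) (hq : q + 1 ≤ 2) :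
    PosF (fun z => g (sw l (alternatingWord i j q) z)) ((i:ℕ):ℤ) ∧
    PosF (fun z => g (sw l (alternatingWord j i q) z)) ((j:ℕ):ℤ) := by
  have hL : (2:ℤ) ≤ (l:ℤ) := by exact_mod_cast hl
  have ejI : sigmaC l j I = I := sig_fix' hj (nCg (Cg.refl l I) (by omega))
    (nCg (Cg.refl l I) (by omega)) (nCg (Cg.refl l I) (by omega)) (nCg (Cg.refl l I) (by omega))
  have ejI1 : sigmaC l j (I+1) = I+1 := sig_fix' hj (nCg (Cg.refl l (I+1)) (by omega))
    (nCg (Cg.refl l (I+1)) (by omega)) (nCg (Cg.refl l (I+1)) (by omega)) (nCg (Cg.refl l (I+1)) (by omega))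
  have eiJ : sigmaC l i J = J := sig_fix' hi (nCg (Cg.refl l J) (by omega))
    (nCg (Cg.refl l J) (by omega)) (nCg (Cg.refl l J) (by omega)) (nCg (Cg.refl l J) (by omega))
  have eiJ1 : sigmaC l i (J+1) = J+1 := sig_fix' hi (nCg (Cg.refl l (J+1)) (by omega))
    (nCg (Cg.refl l (J+1)) (by omega)) (nCg (Cg.refl l (J+1)) (by omega)) (nCg (Cg.refl l (J+1)) (by omega))
  have hq' : q ≤ 1 := by omega
  interval_cases q
  · exact ⟨by simp only [PosF, sw_nil, hi]; exact hp1,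
      by simp only [PosF, sw_nil, hj]; exact hp2⟩
  · constructor
    · have ew : alternatingWord i j 1 = [j] := rfl
      simp only [PosF, ew, sw_cons, sw_nil, hi]
      rw [ejI, ejI1]; exact hp1
    · have ew : alternatingWord j i 1 = [i] := rfl
      simp only [PosF, ew, sw_cons, sw_nil, hj]
      rw [eiJ, eiJ1]; exact hp2

lemma coxMat_ge2 {l : ℕ} {i j : Fin (l+1)} (h : i ≠ j) : 2 ≤ coxMatC l i j := by
  unfold coxMatC
  rw [if_neg h]
  split_ifs <;> omega

open CoxeterSystem in
lemma dihAll {l : ℕ} (hl : 2 ≤ l) (i i' : Fin (l+1)) (hne : i ≠ i') (g : ℤ → ℤ)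
    (hmi : ∀ z, g (1 - z) = 1 - g z) (hsh : ∀ z, g (z + 2*(l:ℤ)) = g z + 2*(l:ℤ))
    (hp1 : PosF g ((i:ℕ):ℤ)) (hp2 : PosF g ((i':ℕ):ℤ)) (q : ℕ)
    (hq : q + 1 ≤ coxMatC l i i') :
    PosF (fun z => g (sw l (alternatingWord i i' q) z)) ((i:ℕ):ℤ) ∧
    PosF (fun z => g (sw l (alternatingWord i' i q) z)) ((i':ℕ):ℤ) := by
  unfold PosF at hp1 hp2
  have hvne : (i:ℕ) ≠ (i':ℕ) := fun h => hne (Fin.val_injective h)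
  have hi_le : (i:ℕ) ≤ l := Nat.lt_succ_iff.mp i.isLt
  have hj_le : (i':ℕ) ≤ l := Nat.lt_succ_iff.mp i'.isLt
  unfold coxMatC at hq
  rw [if_neg hne] at hq
  by_cases h4 : ((i : ℕ) = 0 ∧ (i' : ℕ) = 1) ∨ ((i : ℕ) = 1 ∧ (i' : ℕ) = 0) ∨
      ((i : ℕ) = l - 1 ∧ (i' : ℕ) = l) ∨ ((i : ℕ) = l ∧ (i' : ℕ) = l - 1)
  · rw [if_pos h4] at hq
    rcases h4 with ⟨h1, h2⟩ | ⟨h1, h2⟩ | ⟨h1, h2⟩ | ⟨h1, h2⟩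
    · have hi : ((i:ℕ):ℤ) = 0 := by exact_mod_cast h1
      have hj : ((i':ℕ):ℤ) = 1 := by exact_mod_cast h2
      rw [hi] at hp1; rw [hj] at hp2
      exact dih4a hl hi hj g hmi (by norm_num at hp1 ⊢; exact hp1)
        (by norm_num at hp2 ⊢; exact hp2) q hq
    · have hi : ((i:ℕ):ℤ) = 1 := by exact_mod_cast h1
      have hj : ((i':ℕ):ℤ) = 0 := by exact_mod_cast h2
      rw [hi] at hp1; rw [hj] at hp2
      have := dih4a hl hj hi g hmi (by norm_num at hp2 ⊢; exact hp2)
        (by norm_num at hp1 ⊢; exact hp1) q hq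
      exact ⟨this.2, this.1⟩
    · have hi : ((i:ℕ):ℤ) = (l:ℤ) - 1 := by omega
      have hj : ((i':ℕ):ℤ) = (l:ℤ) := by exact_mod_cast h2
      rw [hi] at hp1; rw [hj] at hp2
      exact dih4b hl hi hj g hmi hsh (by
          have e : (l:ℤ) - 1 + 1 = (l:ℤ) := by ring
          rwa [e] at hp1) hp2 q hq
    · have hi : ((i:ℕ):ℤ) = (l:ℤ) := by exact_mod_cast h1
      have hj : ((i':ℕ):ℤ) = (l:ℤ) - 1 := by omega
      rw [hi] at hp1; rw [hj] at hp2
      have := dih4b hl hj hi g hmi hsh (by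
          have e : (l:ℤ) - 1 + 1 = (l:ℤ) := by ring
          rwa [e] at hp2) hp1 q hq
      exact ⟨this.2, this.1⟩
  · rw [if_neg h4] at hq
    push_neg at h4
    obtain ⟨h41, h42, h43, h44⟩ := h4
    by_cases h3 : (i : ℕ) + 1 = (i' : ℕ) ∨ (i' : ℕ) + 1 = (i : ℕ)
    · rw [if_pos h3] at hq
      rcases h3 with h3 | h3
      · have hj : ((i':ℕ):ℤ) = ((i:ℕ):ℤ) + 1 := by exact_mod_cast h3.symm
        rw [hj] at hp2
        exact dih3 hl ((i:ℕ):ℤ) rfl hj (by omega) (by omega) g hp1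
          (by have e : ((i:ℕ):ℤ) + 1 + 1 = ((i:ℕ):ℤ) + 2 := by ring
              rwa [e] at hp2) q hq
      · have hj : ((i:ℕ):ℤ) = ((i':ℕ):ℤ) + 1 := by exact_mod_cast h3.symm
        rw [hj] at hp1
        have := dih3 hl ((i':ℕ):ℤ) rfl hj (by omega) (by omega) g hp2
          (by have e : ((i':ℕ):ℤ) + 1 + 1 = ((i':ℕ):ℤ) + 2 := by ring
              rwa [e] at hp1) q hq
        exact ⟨this.2, this.1⟩
    · rw [if_neg h3] at hq
      push_neg at h3
      exact dih2 hl ((i:ℕ):ℤ) ((i':ℕ):ℤ) rfl rfl (by omega) (by omega) (by omega) (by omega)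
        (by omega) (by omega) (by omega) (by omega) (by omega) g hp1 hp2 q hq

section Crux

variable {l : ℕ} (hl : 2 ≤ l) (ρ : W l →* Equiv.Perm ℤ)
  (hρ : ∀ (j : Fin (l + 1)) (z : ℤ), ρ (PresentedGroup.of j) z = sigmaC l j z)

open CoxeterSystem

lemma strip (n : ℕ) (w : W l) (hn : (csC l).length w = n) (i i' : Fin (l+1)) (hne : i' ≠ i)
    (hdesc : (csC l).IsRightDescent w i') (hasc : ¬ (csC l).IsRightDescent w i) :
    ∃ q v, 1 ≤ q ∧ q + 1 ≤ coxMatC l i i' ∧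
      w = v * (csC l).wordProd (alternatingWord i i' q) ∧
      (csC l).length v + q = n ∧
      ¬ (csC l).IsRightDescent v i ∧ ¬ (csC l).IsRightDescent v i' := by
  have hm2 : 2 ≤ coxMatC l i i' := coxMat_ge2 (Ne.symm hne)
  have aux : ∀ k t u, t + k = coxMatC l i i' → 1 ≤ t →
      w = u * (csC l).wordProd (alternatingWord i i' t) →
      (csC l).length u + t = n →
      ¬ (csC l).IsRightDescent u (if Even (t-1) then i' else i) →
      ∃ q v, 1 ≤ q ∧ q + 1 ≤ coxMatC l i i' ∧
        w = v * (csC l).wordProd (alternatingWord i i' q) ∧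
        (csC l).length v + q = n ∧
        ¬ (csC l).IsRightDescent v i ∧ ¬ (csC l).IsRightDescent v i' := by
    intro k
    induction k with
    | zero =>
      intro t u ht ht1 hw hlen hprev
      exfalso
      apply hasc
      have htm : t = coxMatC l i i' := by omega
      have hM : (CM l) i i' = coxMatC l i i' := rfl
      have hM' : (CM l) i' i = coxMatC l i i' := by rw [CM_apply, coxMatC_symm]
      have hbraid : (csC l).wordProd (alternatingWord i i' t)
          = (csC l).wordProd (alternatingWord i' i t) := by
        have hb := (csC l).wordProd_braidWord_eq i i'
        unfold CoxeterSystem.braidWord at hb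
        rw [hM, hM', ← htm] at hb
        exact hb
      have hconcat : alternatingWord i' i t = (alternatingWord i i' (t-1)).concat i := by
        have := alternatingWord_succ i' i (t-1)
        rwa [Nat.sub_add_cancel ht1] at this
      have hws : w * (csC l).simple i = u * (csC l).wordProd (alternatingWord i i' (t-1)) := by
        rw [hw, hbraid, hconcat, CoxeterSystem.wordProd_concat]
        simp [mul_assoc]
      have hlen2 : (csC l).length (w * (csC l).simple i) < n := by
        rw [hws]
        calc (csC l).length (u * (csC l).wordProd (alternatingWord i i' (t-1)))
            ≤ (csC l).length u + (csC l).length ((csC l).wordProd (alternatingWord i i' (t-1))) :=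
              (csC l).length_mul_le _ _
          _ ≤ (csC l).length u + (t-1) := by
              have := (csC l).length_wordProd_le (alternatingWord i i' (t-1))
              rw [length_alternatingWord] at this
              omega
          _ < n := by omega
      unfold CoxeterSystem.IsRightDescent
      omega
    | succ k ih =>
      intro t u ht ht1 hw hlen hprev
      by_cases hdd : (csC l).IsRightDescent u (if Even t then i' else i)
      · have hdl : (csC l).length (u * (csC l).simple (if Even t then i' else i)) + 1
            = (csC l).length u := by
          rcases (csC l).length_mul_simple u (if Even t then i' else i) with h | h
          · unfold CoxeterSystem.IsRightDescent at hdd; omega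
          · exact h
        apply ih (t+1) (u * (csC l).simple (if Even t then i' else i))
        · omega
        · omega
        · rw [alternatingWord_succ' i i' t, CoxeterSystem.wordProd_cons, hw]
          simp [mul_assoc]
        · omega
        · simp only [Nat.add_sub_cancel]
          unfold CoxeterSystem.IsRightDescent
          rw [CoxeterSystem.simple_mul_simple_cancel_right]
          omega
      · refine ⟨t, u, ht1, by omega, hw, hlen, ?_, ?_⟩
        · rcases Nat.even_or_odd t with he | ho
          · have : ¬ Even (t-1) := by
              rcases he with ⟨c, hc⟩
              rintro ⟨c', hc'⟩
              omega
            rw [if_neg this] at hprev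
            exact hprev
          · rw [if_neg (by rwa [← Nat.not_even_iff_odd] at ho)] at hdd
            exact hdd
        · rcases Nat.even_or_odd t with he | ho
          · rw [if_pos he] at hdd
            exact hdd
          · have : Even (t-1) := by
              rcases ho with ⟨c, hc⟩
              exact ⟨c, by omega⟩
            rw [if_pos this] at hprev
            exact hprev
  have hd1 : (csC l).length (w * (csC l).simple i') + 1 = n := by
    rcases (csC l).length_mul_simple w i' with h | h
    · unfold CoxeterSystem.IsRightDescent at hdesc; omega
    · omega
  apply aux (coxMatC l i i' - 1) 1 (w * (csC l).simple i')
  · omega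
  · omega
  · have : alternatingWord i i' 1 = [i'] := rfl
    rw [this, CoxeterSystem.wordProd_singleton]
    simp [mul_assoc]
  · omega
  · simp only [Nat.sub_self]
    rw [if_pos (by exact ⟨0, rfl⟩)]
    unfold CoxeterSystem.IsRightDescent
    rw [CoxeterSystem.simple_mul_simple_cancel_right]
    omega

include hl hρ in
theorem crux : ∀ n (w : W l), (csC l).length w = n → ∀ i : Fin (l+1),
    ¬ (csC l).IsRightDescent w i → PosF (⇑(ρ w)) ((i:ℕ):ℤ) := by
  intro n
  induction n using Nat.strong_induction_on with
  | _ n ih =>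
  intro w hn i hasc
  rcases Nat.eq_zero_or_pos n with h0 | hpos
  · have hw : w = 1 := (csC l).length_eq_zero_iff.mp (by omega)
    subst hw
    simp only [map_one, PosF, Equiv.Perm.coe_one, id_eq]
    omega
  · have hw1 : w ≠ 1 := by
      intro h
      rw [h, (csC l).length_one] at hn
      omega
    obtain ⟨i', hdesc⟩ := (csC l).exists_rightDescent_of_ne_one hw1
    have hne : i' ≠ i := by rintro rfl; exact hasc hdesc
    obtain ⟨q0, v, hq1, hqm, hwv, hlv, havi, havi'⟩ := strip n w hn i i' hne hdesc hasc
    have hlvn : (csC l).length v < n := by omega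
    have hpv1 : PosF (⇑(ρ v)) ((i:ℕ):ℤ) := ih _ hlvn v rfl i havi
    have hpv2 : PosF (⇑(ρ v)) ((i':ℕ):ℤ) := ih _ hlvn v rfl i' havi'
    have hfun : ⇑(ρ (v * (csC l).wordProd (alternatingWord i i' q0)))
        = fun z => ρ v (sw l (alternatingWord i i' q0) z) := by
      funext z
      rw [map_mul, Equiv.Perm.mul_apply, rho_wordProd ρ hρ]
    rw [hwv, hfun]
    exact (dihAll hl i i' (Ne.symm hne) (⇑(ρ v)) (rho_mirror ρ hρ v) (rho_shift ρ hρ v)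
      hpv1 hpv2 q0 hqm).1

end Crux

theorem faithful (l : ℕ) (hl : 2 ≤ l) (ρ : W l →* Equiv.Perm ℤ)
    (hρ : ∀ (j : Fin (l + 1)) (z : ℤ), ρ (PresentedGroup.of j) z = sigmaC l j z) :
    Function.Injective ρ := by
  rw [injective_iff_map_eq_one]
  intro w hw
  by_contra hw1
  obtain ⟨i', hdesc⟩ := (csC l).exists_rightDescent_of_ne_one hw1
  have hnd : ¬ (csC l).IsRightDescent (w * (csC l).simple i') i' := by
    unfold CoxeterSystem.IsRightDescent at hdesc ⊢
    rw [CoxeterSystem.simple_mul_simple_cancel_right]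
    omega
  have hpos := crux hl ρ hρ ((csC l).length (w * (csC l).simple i'))
    (w * (csC l).simple i') rfl i' hnd
  have he : ⇑(ρ (w * (csC l).simple i')) = ⇑(sigP l i') := by
    rw [map_mul, hw, one_mul, rho_simple ρ hρ]
  rw [he] at hpos
  unfold PosF at hpos
  have e1 : sigmaC l i' (((i':ℕ):ℤ)) = ((i':ℕ):ℤ) + 1 := sig_up (Or.inl (Cg.refl l _))
  have e2 : sigmaC l i' (((i':ℕ):ℤ) + 1) = ((i':ℕ):ℤ) :=
    (sig_down (Or.inl (Cg.refl l _))).trans (by ring)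
  rw [sigP_apply, sigP_apply, e1, e2] at hpos
  omega

end Stmt11

/-- The standard permutation representation of the affine
Weyl group of type `C_l^{(1)}` on `ℤ`: each `σ_j` is a bijection, there is a
unique homomorphism `ρ : W → Sym(ℤ)` with `ρ(s_j) = σ_j`, and any such `ρ`
is injective. -/
theorem stmt11 (l : ℕ) (hl : 2 ≤ l) :
    (∀ j : Fin (l + 1), Function.Bijective (sigmaC l j)) ∧
    (∃! ρ : PresentedGroup (coxRels (coxMatC l)) →* Equiv.Perm ℤ,
      ∀ (j : Fin (l + 1)) (z : ℤ), ρ (PresentedGroup.of j) z = sigmaC l j z) ∧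
    (∀ ρ : PresentedGroup (coxRels (coxMatC l)) →* Equiv.Perm ℤ,
      (∀ (j : Fin (l + 1)) (z : ℤ), ρ (PresentedGroup.of j) z = sigmaC l j z) →
      Function.Injective ρ) := by
  refine ⟨?_, ⟨Stmt11.rho0 l hl, ?_, ?_⟩, ?_⟩
  · intro j
    exact (Function.Involutive.bijective (fun z => Stmt11.sig_invol j z))
  · intro j z
    rw [Stmt11.rho0_of l hl j]
    rfl
  · intro ρ hρ
    exact Stmt11.rho_eq_rho0 l hl ρ hρ
  · intro ρ hρ
    exact Stmt11.faithful l hl ρ hρ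
end

section
/- The map pi defined by pi(f) = {(x, y) in E_0 : y < f(x)} is a bijection from the set of binary paths of type B_l^{(1)} onto the set of ideals of E_0. -/
/-- The underlying set of the finite heap `E_0` of type `B_l^{(1)}`:
`{(x, y) : 0 ≤ x ≤ l-1, -x ≤ y ≤ x, x - y even}`. -/
def E0 (l : ℕ) : Set (ℤ × ℤ) :=
  {p | 0 ≤ p.1 ∧ p.1 ≤ (l : ℤ) - 1 ∧ -p.1 ≤ p.2 ∧ p.2 ≤ p.1 ∧ (2 : ℤ) ∣ (p.1 - p.2)}

/-- The covering-type step relation on `E_0`: `a` is directly below `b` when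
both lie in `E_0`, `b.2 = a.2 + 1` and `|b.1 - a.1| = 1`. -/
def E0Step (l : ℕ) (a b : ℤ × ℤ) : Prop :=
  a ∈ E0 l ∧ b ∈ E0 l ∧ b.2 = a.2 + 1 ∧ (b.1 = a.1 + 1 ∨ a.1 = b.1 + 1)

/-- The partial order on `E_0`: the reflexive-transitive closure of the step
relation. -/
def E0Le (l : ℕ) : ℤ × ℤ → ℤ × ℤ → Prop := Relation.ReflTransGen (E0Step l)

/-- An ideal of `E_0`: a downward-closed subset of `E_0` (the empty set and
all of `E_0` are allowed). -/
def IsIdealE0 (l : ℕ) (G : Set (ℤ × ℤ)) : Prop :=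
  G ⊆ E0 l ∧ ∀ b ∈ G, ∀ a ∈ E0 l, E0Le l a b → a ∈ G

/-- A binary path of type `B_l^{(1)}`: a function `f` on `{-1, 0, …, l-1}`
with `f(-1) = 0` and `|f(i+1) - f(i)| = 1` for all consecutive points. -/
def BinaryPathB (l : ℕ) : Type :=
  {f : {x : ℤ // -1 ≤ x ∧ x ≤ (l : ℤ) - 1} → ℤ //
    f ⟨-1, by omega⟩ = 0 ∧
    ∀ (x : ℤ) (h1 : -1 ≤ x) (h2 : x ≤ (l : ℤ) - 2),
      f ⟨x + 1, by omega⟩ = f ⟨x, by omega⟩ + 1 ∨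
      f ⟨x + 1, by omega⟩ = f ⟨x, by omega⟩ - 1}

/-- The map `π` from binary paths to subsets of `E_0`:
`π(f) = {(x, y) ∈ E_0 : y < f(x)}`. -/
def piMapB (l : ℕ) (f : BinaryPathB l) : Set (ℤ × ℤ) :=
  {p | ∃ h : p ∈ E0 l, p.2 < f.val ⟨p.1, by exact ⟨by have := h.1; omega, h.2.1⟩⟩}

namespace Stmt15Aux

open Classical

lemma mem_E0 (l : ℕ) (x y : ℤ) :
    (x, y) ∈ E0 l ↔ 0 ≤ x ∧ x ≤ (l : ℤ) - 1 ∧ -x ≤ y ∧ y ≤ x ∧ (2 : ℤ) ∣ (x - y) :=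
  Iff.rfl

def pVal (l : ℕ) (f : BinaryPathB l) (x : ℤ) : ℤ :=
  if h : -1 ≤ x ∧ x ≤ (l : ℤ) - 1 then f.val ⟨x, h⟩ else 0

lemma pVal_eq (l : ℕ) (f : BinaryPathB l) (x : ℤ) (h : -1 ≤ x ∧ x ≤ (l : ℤ) - 1) :
    pVal l f x = f.val ⟨x, h⟩ := dif_pos h

lemma pVal_neg (l : ℕ) (f : BinaryPathB l) : pVal l f (-1) = 0 := by
  rw [pVal_eq l f (-1) ⟨le_refl _, by omega⟩]
  exact f.2.1

lemma pVal_step (l : ℕ) (f : BinaryPathB l) {x : ℤ} (h1 : -1 ≤ x) (h2 : x ≤ (l : ℤ) - 2) :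
    pVal l f (x + 1) = pVal l f x + 1 ∨ pVal l f (x + 1) = pVal l f x - 1 := by
  rw [pVal_eq l f (x + 1) ⟨by omega, by omega⟩, pVal_eq l f x ⟨by omega, by omega⟩]
  exact f.2.2 x h1 h2

lemma pVal_bound_nat (l : ℕ) (f : BinaryPathB l) :
    ∀ n : ℕ, (n : ℤ) - 1 ≤ (l : ℤ) - 1 →
      -((n : ℤ) - 1 + 1) ≤ pVal l f ((n : ℤ) - 1) ∧ pVal l f ((n : ℤ) - 1) ≤ (n : ℤ) - 1 + 1 ∧
        (2 : ℤ) ∣ ((n : ℤ) - 1 + 1 - pVal l f ((n : ℤ) - 1)) := by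
  intro n
  induction n with
  | zero =>
    intro _
    have h0 := pVal_neg l f
    norm_num
    omega
  | succ n ih =>
    intro h2
    push_cast at h2 ⊢
    have ih' := ih (by omega)
    push_cast at ih'
    have hs := pVal_step l f (x := (n : ℤ) - 1) (by omega) (by omega)
    rw [show (n : ℤ) - 1 + 1 = n by ring] at hs
    rw [show (n : ℤ) + 1 - 1 = n by ring]
    omega

lemma pVal_bound (l : ℕ) (f : BinaryPathB l) :
    ∀ x : ℤ, -1 ≤ x → x ≤ (l : ℤ) - 1 →
      -(x + 1) ≤ pVal l f x ∧ pVal l f x ≤ x + 1 ∧ (2 : ℤ) ∣ (x + 1 - pVal l f x) := by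
  intro x h1 h2
  have := pVal_bound_nat l f (x + 1).toNat (by omega)
  rw [show ((((x + 1).toNat : ℕ)) : ℤ) - 1 = x by omega] at this
  exact this

lemma piMapB_mem (l : ℕ) (f : BinaryPathB l) (p : ℤ × ℤ) :
    p ∈ piMapB l f ↔ p ∈ E0 l ∧ p.2 < pVal l f p.1 := by
  constructor
  · rintro ⟨h, hlt⟩
    exact ⟨h, by rw [pVal_eq l f p.1 ⟨by have := h.1; omega, h.2.1⟩]; exact hlt⟩
  · rintro ⟨h, hlt⟩
    exact ⟨h, by rw [← pVal_eq l f p.1 ⟨by have := h.1; omega, h.2.1⟩]; exact hlt⟩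

lemma col_chain (l : ℕ) (x : ℤ) :
    ∀ k : ℕ, ∀ y y' : ℤ, (x, y) ∈ E0 l → (x, y') ∈ E0 l → y - y' = 2 * k →
      E0Le l (x, y') (x, y) := by
  intro k
  induction k with
  | zero =>
    intro y y' _ _ h
    have : y = y' := by omega
    exact this ▸ Relation.ReflTransGen.refl
  | succ k ih =>
    intro y y' hy hy' heq
    rw [mem_E0] at hy hy'
    push_cast at heq
    have hx : 1 ≤ x := by omega
    have hmid : (x, y - 2) ∈ E0 l := by rw [mem_E0]; omega
    have hdiag : (x - 1, y - 1) ∈ E0 l := by rw [mem_E0]; omega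
    have h1 : E0Le l (x, y') (x, y - 2) := ih (y - 2) y' hmid (by rw [mem_E0]; omega) (by omega)
    refine (h1.tail ⟨hmid, hdiag, ?_, Or.inr ?_⟩).tail ⟨hdiag, by rw [mem_E0]; omega, ?_, Or.inl ?_⟩
    · show y - 1 = y - 2 + 1; ring
    · show x = x - 1 + 1; ring
    · show y = y - 1 + 1; ring
    · show x = x - 1 + 1; ring

lemma col_le (l : ℕ) {x y y' : ℤ} (hy : (x, y) ∈ E0 l) (hy' : (x, y') ∈ E0 l) (h : y' ≤ y) :
    E0Le l (x, y') (x, y) := by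
  have hpar : (2 : ℤ) ∣ (y - y') := by rw [mem_E0] at hy hy'; omega
  obtain ⟨k, hk⟩ := hpar
  exact col_chain l x k.toNat y y' hy hy' (by omega)

lemma ideal_col {l : ℕ} {G : Set (ℤ × ℤ)} (hG : IsIdealE0 l G) {x y y' : ℤ}
    (hy : (x, y) ∈ G) (hy' : (x, y') ∈ E0 l) (h : y' ≤ y) : (x, y') ∈ G :=
  hG.2 _ hy _ hy' (col_le l (hG.1 hy) hy' h)

lemma step_down (l : ℕ) (f : BinaryPathB l) {a b : ℤ × ℤ}
    (hstep : E0Step l a b) (hb : b ∈ piMapB l f) : a ∈ piMapB l f := by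
  obtain ⟨ha, hbE, hy, hx⟩ := hstep
  rw [piMapB_mem] at hb ⊢
  refine ⟨ha, ?_⟩
  have hb2 := hb.2
  have ha1 : 0 ≤ a.1 ∧ a.1 ≤ (l : ℤ) - 1 := ⟨ha.1, ha.2.1⟩
  have hb1 : 0 ≤ b.1 ∧ b.1 ≤ (l : ℤ) - 1 := ⟨hbE.1, hbE.2.1⟩
  have hparb : (2 : ℤ) ∣ (b.1 + 1 - pVal l f b.1) :=
    (pVal_bound l f b.1 (by omega) (by omega)).2.2
  have hparE : (2 : ℤ) ∣ (b.1 - b.2) := hbE.2.2.2.2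
  rcases hx with h | h
  · have hs := pVal_step l f (x := a.1) (by omega) (by omega)
    rw [h] at hb2 hparb hparE
    omega
  · have hs := pVal_step l f (x := b.1) (by omega) (by omega)
    rw [← h] at hs
    omega

lemma pi_isIdeal (l : ℕ) (f : BinaryPathB l) : IsIdealE0 l (piMapB l f) := by
  constructor
  · intro p hp
    obtain ⟨h, _⟩ := hp
    exact h
  · intro b hb a _ hle
    revert hb
    induction hle with
    | refl => exact fun h => h
    | tail _ hcb ih => exact fun hb => ih (step_down l f hcb hb)

lemma pi_mono (l : ℕ) (f g : BinaryPathB l) (h : piMapB l f ⊆ piMapB l g) :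
    ∀ x : ℤ, -1 ≤ x → x ≤ (l : ℤ) - 1 → pVal l f x ≤ pVal l g x := by
  intro x h1 h2
  rcases eq_or_lt_of_le h1 with he | hx
  · rw [← he, pVal_neg, pVal_neg]
  · by_contra hlt
    push_neg at hlt
    have hbf := pVal_bound l f x h1 h2
    have hbg := pVal_bound l g x h1 h2
    have hp : (x, pVal l f x - 1) ∈ piMapB l f := by
      rw [piMapB_mem, mem_E0]
      refine ⟨⟨by omega, by omega, by omega, by omega, by omega⟩, by show pVal l f x - 1 < pVal l f x; omega⟩
    have hq := h hp
    rw [piMapB_mem] at hq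
    have h2 : pVal l f x - 1 < pVal l g x := hq.2
    omega

open Classical in
noncomputable def buildF (G : Set (ℤ × ℤ)) : ℕ → ℤ
  | 0 => 0
  | n + 1 => if ((n : ℤ), buildF G n) ∈ G then buildF G n + 1 else buildF G n - 1

lemma buildF_bound (G : Set (ℤ × ℤ)) (n : ℕ) :
    -(n : ℤ) ≤ buildF G n ∧ buildF G n ≤ n ∧ (2 : ℤ) ∣ ((n : ℤ) - buildF G n) := by
  induction n with
  | zero => simp [buildF]
  | succ n ih =>
    rw [buildF]
    split <;> push_cast <;> omega

lemma claim (l : ℕ) (G : Set (ℤ × ℤ)) (hG : IsIdealE0 l G) :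
    ∀ n : ℕ, (n : ℤ) ≤ (l : ℤ) - 1 → ∀ y : ℤ,
      (((n : ℤ), y) ∈ G ↔ (((n : ℤ), y) ∈ E0 l ∧ y < buildF G (n + 1))) := by
  intro n
  induction n with
  | zero =>
    intro hn y
    have hb1 : buildF G 1 = if ((0 : ℤ), (0 : ℤ)) ∈ G then (1 : ℤ) else -1 := by
      rw [buildF]
      simp [buildF]
    push_cast
    constructor
    · intro hy
      have hE := hG.1 hy
      rw [mem_E0] at hE
      have hy0 : y = 0 := by omega
      subst hy0
      rw [hb1, if_pos hy]
      exact ⟨by rw [mem_E0]; omega, by omega⟩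
    · rintro ⟨hE, hlt⟩
      rw [mem_E0] at hE
      have hy0 : y = 0 := by omega
      subst hy0
      rw [hb1] at hlt
      by_cases hc : ((0 : ℤ), (0 : ℤ)) ∈ G
      · exact hc
      · rw [if_neg hc] at hlt; omega
  | succ n ih =>
    intro hn y
    push_cast at hn
    have ihn := ih (by omega)
    obtain ⟨hbl, hbu, hbp⟩ := buildF_bound G (n + 1)
    push_cast at hbl hbu hbp
    have hsucc : buildF G (n + 1 + 1) =
        if (((n : ℤ) + 1), buildF G (n + 1)) ∈ G then buildF G (n + 1) + 1
        else buildF G (n + 1) - 1 := by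
      rw [buildF]
      push_cast
      rfl
    set m := buildF G (n + 1) with hm
    push_cast
    have hmE : ((n : ℤ) + 1, m) ∈ E0 l := by rw [mem_E0]; omega
    by_cases hc : (((n : ℤ) + 1), m) ∈ G
    · rw [hsucc, if_pos hc]
      constructor
      · intro hy
        have hE := hG.1 hy
        refine ⟨hE, ?_⟩
        rw [mem_E0] at hE
        by_contra hge
        push_neg at hge
        -- y ≥ m + 1, parity forces y ≥ m + 2
        have hy2 : m + 2 ≤ y := by omega
        have hd : ((n : ℤ), y - 1) ∈ E0 l := by rw [mem_E0]; omega
        have hstep : E0Step l ((n : ℤ), y - 1) ((n : ℤ) + 1, y) := by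
          refine ⟨hd, by rw [mem_E0]; omega, ?_, Or.inl ?_⟩
          · show y = y - 1 + 1; ring
          · show (n : ℤ) + 1 = n + 1; ring
        have hdG := hG.2 _ hy _ hd (Relation.ReflTransGen.single hstep)
        have := (ihn (y - 1)).mp hdG
        omega
      · rintro ⟨hE, hlt⟩
        rw [mem_E0] at hE
        exact ideal_col hG hc (by rw [mem_E0]; omega) (by omega)
    · rw [hsucc, if_neg hc]
      constructor
      · intro hy
        have hE := hG.1 hy
        refine ⟨hE, ?_⟩
        rw [mem_E0] at hE
        by_contra hge
        push_neg at hge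
        have : y = m ∨ m + 2 ≤ y := by omega
        rcases this with h | h
        · subst h; exact absurd hy hc
        · exact hc (ideal_col hG hy hmE (by omega))
      · rintro ⟨hE, hlt⟩
        rw [mem_E0] at hE
        have hd : ((n : ℤ), y + 1) ∈ E0 l := by rw [mem_E0]; omega
        have hdG : ((n : ℤ), y + 1) ∈ G := (ihn (y + 1)).mpr ⟨hd, by omega⟩
        have hstep : E0Step l ((n : ℤ) + 1, y) ((n : ℤ), y + 1) := by
          refine ⟨by rw [mem_E0]; omega, hd, rfl, Or.inr ?_⟩
          show (n : ℤ) + 1 = n + 1; ring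
        exact hG.2 _ hdG _ (by rw [mem_E0]; omega) (Relation.ReflTransGen.single hstep)

end Stmt15Aux

open Stmt15Aux in
/-- `π` is a bijection from the set of binary paths of type
`B_l^{(1)}` onto the set of ideals of `E_0`. -/
theorem stmt15 (l : ℕ) (hl : 1 ≤ l) :
    Function.Injective (piMapB l) ∧
    Set.range (piMapB l) = {G : Set (ℤ × ℤ) | IsIdealE0 l G} := by
  constructor
  · intro f g hfg
    apply Subtype.ext
    funext p
    obtain ⟨x, hx1, hx2⟩ := p
    have h1 := pi_mono l f g (fun _ h => hfg ▸ h) x hx1 hx2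
    have h2 := pi_mono l g f (fun _ h => hfg.symm ▸ h) x hx1 hx2
    rw [pVal_eq l f x ⟨hx1, hx2⟩, pVal_eq l g x ⟨hx1, hx2⟩] at h1 h2
    exact le_antisymm h1 h2
  · ext G
    simp only [Set.mem_range, Set.mem_setOf_eq]
    constructor
    · rintro ⟨f, rfl⟩
      exact pi_isIdeal l f
    · intro hG
      refine ⟨⟨fun x => buildF G (x.val + 1).toNat, ?_, ?_⟩, ?_⟩
      · show buildF G ((-1 : ℤ) + 1).toNat = 0
        norm_num [buildF]
      · intro x h1 h2
        show buildF G (x + 1 + 1).toNat = _ ∨ buildF G (x + 1 + 1).toNat = _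
        have e : (x + 1 + 1).toNat = (x + 1).toNat + 1 := by omega
        rw [e, buildF]
        split
        · left; rfl
        · right; rfl
      · ext p
        constructor
        · rintro ⟨hE, hlt⟩
          have h0 : (0 : ℤ) ≤ p.1 := hE.1
          have h1 : p.1 ≤ (l : ℤ) - 1 := hE.2.1
          have e2 : ((p.1.toNat : ℤ)) = p.1 := by omega
          have e : (p.1 + 1).toNat = p.1.toNat + 1 := by omega
          have hlt' : p.2 < buildF G (p.1.toNat + 1) := by rw [← e]; exact hlt
          have hE' : ((p.1.toNat : ℤ), p.2) ∈ E0 l := by rw [e2]; exact hE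
          have hmem := (claim l G hG p.1.toNat (by omega) p.2).mpr ⟨hE', hlt'⟩
          rw [e2] at hmem
          exact hmem
        · intro hp
          have hE := hG.1 hp
          have h0 : (0 : ℤ) ≤ p.1 := hE.1
          have h1 : p.1 ≤ (l : ℤ) - 1 := hE.2.1
          have e2 : ((p.1.toNat : ℤ)) = p.1 := by omega
          have e : (p.1 + 1).toNat = p.1.toNat + 1 := by omega
          have hp' : ((p.1.toNat : ℤ), p.2) ∈ G := by rw [e2]; exact hp
          have hmem := (claim l G hG p.1.toNat (by omega) p.2).mp hp'
          refine ⟨hE, ?_⟩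
          show p.2 < buildF G (p.1 + 1).toNat
          rw [e]
          exact hmem.2
end

section
/- The poset E_0 has exactly 2^l ideals (including the empty set and E_0 itself). -/
/- ### Auxiliary development -/

open Classical in
/-- The lattice path determined by a sequence of up/down bits. -/
def fpath (ε : ℕ → Bool) : ℕ → ℤ
  | 0 => 0
  | n+1 => fpath ε n + (if ε n then 1 else -1)

lemma fpath_step (ε : ℕ → Bool) (n : ℕ) :
    fpath ε (n+1) = fpath ε n + 1 ∨ fpath ε (n+1) = fpath ε n - 1 := by
  by_cases h : ε n <;> simp [fpath, h] <;> ring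

lemma fpath_bounds (ε : ℕ → Bool) (n : ℕ) :
    -(n:ℤ) ≤ fpath ε n ∧ fpath ε n ≤ n ∧ (2:ℤ) ∣ ((n:ℤ) - fpath ε n) := by
  induction n with
  | zero => simp [fpath]
  | succ n ih =>
    obtain ⟨h1, h2, h3⟩ := ih
    rcases fpath_step ε n with h | h <;> rw [h] <;> push_cast <;> omega

open Classical in
/-- The lattice path determined by an ideal `G`. -/
noncomputable def pathOf (G : Set (ℤ × ℤ)) : ℕ → ℤ
  | 0 => 0
  | n+1 => pathOf G n + (if ((n:ℤ), pathOf G n) ∈ G then 1 else -1)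

open Classical in
/-- The bit sequence determined by an ideal `G`. -/
noncomputable def epsOf (G : Set (ℤ × ℤ)) : ℕ → Bool :=
  fun n => if ((n:ℤ), pathOf G n) ∈ G then true else false

lemma pathOf_eq_fpath (G : Set (ℤ × ℤ)) (n : ℕ) : pathOf G n = fpath (epsOf G) n := by
  induction n with
  | zero => simp [pathOf, fpath]
  | succ n ih =>
    rw [pathOf, fpath, ← ih, epsOf]
    split_ifs with h h' h'
    · rfl
    · simp [h] at h'
    · simp [h] at h'
    · rfl

lemma pathOf_step (G : Set (ℤ × ℤ)) (n : ℕ) :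
    pathOf G (n+1) = pathOf G n + 1 ∨ pathOf G (n+1) = pathOf G n - 1 := by
  rw [pathOf_eq_fpath, pathOf_eq_fpath]; exact fpath_step _ _

lemma pathOf_bounds (G : Set (ℤ × ℤ)) (n : ℕ) :
    -(n:ℤ) ≤ pathOf G n ∧ pathOf G n ≤ n ∧ (2:ℤ) ∣ ((n:ℤ) - pathOf G n) := by
  rw [pathOf_eq_fpath]; exact fpath_bounds _ _

/-- Going down by `2k` within a column is going down in the order. -/
lemma e0le_col (l : ℕ) : ∀ k : ℕ, ∀ x y : ℤ, (x, y) ∈ E0 l → (x, y - 2*(k:ℤ)) ∈ E0 l →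
    E0Le l (x, y - 2*(k:ℤ)) (x, y) := by
  intro k
  induction k with
  | zero =>
    intro x y h h'
    have : y - 2*((0:ℕ):ℤ) = y := by push_cast; ring
    rw [this]
    exact Relation.ReflTransGen.refl
  | succ k ih =>
    intro x y h h'
    obtain ⟨hx0, hxl, hyl, hyu, hd⟩ := h
    obtain ⟨_, _, hyl', hyu', hd'⟩ := h'
    simp only at hx0 hxl hyl hyu hd hyl' hyu' hd'
    push_cast at hyl' hyu' hd'
    have hx1 : 1 ≤ x := by omega
    have hmid : (x, y - 2) ∈ E0 l := by
      refine ⟨hx0, hxl, by omega, by omega, by omega⟩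
    have h1 : E0Le l (x, y - 2*((k+1:ℕ):ℤ)) (x, (y-2)) := by
      have e : y - 2*((k+1:ℕ):ℤ) = (y - 2) - 2*(k:ℤ) := by push_cast; ring
      rw [e]
      refine ih x (y-2) hmid ?_
      rw [← e]; exact ⟨hx0, hxl, by omega, by omega, by omega⟩
    have hm2 : (x - 1, y - 1) ∈ E0 l := ⟨by omega, by omega, by omega, by omega, by omega⟩
    have s1 : E0Step l (x, y-2) (x-1, y-1) :=
      ⟨hmid, hm2, by ring, Or.inr (by ring)⟩
    have s2 : E0Step l (x-1, y-1) (x, y) :=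
      ⟨hm2, ⟨hx0, hxl, hyl, hyu, hd⟩, by ring, Or.inl (by ring)⟩
    exact Relation.ReflTransGen.tail (Relation.ReflTransGen.tail h1 s1) s2

/-- An ideal is downward closed within each column. -/
lemma ideal_col {l : ℕ} {G : Set (ℤ × ℤ)} (hG : IsIdealE0 l G) {x y y' : ℤ}
    (hy : (x, y) ∈ G) (hy' : (x, y') ∈ E0 l) (hle : y' ≤ y) : (x, y') ∈ G := by
  have hE : (x, y) ∈ E0 l := hG.1 hy
  have hd : (2:ℤ) ∣ (x - y) := hE.2.2.2.2
  have hd' : (2:ℤ) ∣ (x - y') := hy'.2.2.2.2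
  have hpar : (2:ℤ) ∣ (y - y') := by omega
  obtain ⟨k, hk⟩ := hpar
  lift k to ℕ using (by omega : (0:ℤ) ≤ k)
  have hy'e : y' = y - 2*(k:ℤ) := by omega
  subst hy'e
  exact hG.2 _ hy _ hy' (e0le_col l k x y hE hy')

/-- Key lemma: an ideal is exactly the region below its lattice path. -/
lemma key_ideal {l : ℕ} {G : Set (ℤ × ℤ)} (hG : IsIdealE0 l G) :
    ∀ n : ℕ, (n:ℤ) ≤ (l:ℤ) - 1 → ∀ y : ℤ, ((n:ℤ), y) ∈ E0 l →
      (((n:ℤ), y) ∈ G ↔ y < pathOf G (n+1)) := by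
  classical
  intro n
  induction n with
  | zero =>
    intro hn y hy
    obtain ⟨_, _, h1, h2, _⟩ := hy
    simp only [Nat.cast_zero, neg_zero] at h1 h2
    have hy0 : y = 0 := le_antisymm h2 h1
    subst hy0
    rw [pathOf]
    by_cases h : (((0:ℕ):ℤ), pathOf G 0) ∈ G
    · rw [if_pos h]
      simp only [pathOf] at h ⊢
      constructor
      · intro _; omega
      · intro _; exact h
    · rw [if_neg h]
      simp only [pathOf] at h ⊢
      constructor
      · intro hc; exact absurd hc h
      · intro hc; omega
  | succ n ih =>
    intro hn y hy
    set c := pathOf G (n+1) with hc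
    obtain ⟨hcl, hcu, hcd⟩ := pathOf_bounds G (n+1)
    rw [← hc] at hcl hcu hcd
    have hcE : (((n+1:ℕ):ℤ), c) ∈ E0 l := by
      refine ⟨by push_cast; omega, by push_cast at hn ⊢; omega, by push_cast; omega,
        by push_cast; omega, by push_cast at hcd ⊢; omega⟩
    obtain ⟨hx0, hxl, hyl, hyu, hyd⟩ := hy
    simp only at hx0 hxl hyl hyu hyd
    push_cast at hx0 hxl hyl hyu hyd hn
    have hrec : pathOf G (n+2) = c + (if (((n+1:ℕ):ℤ), c) ∈ G then 1 else -1) := by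
      rw [pathOf, ← hc]
    by_cases hmem : (((n+1:ℕ):ℤ), c) ∈ G
    · rw [if_pos hmem] at hrec
      rw [show (n+1)+1 = n+2 from rfl, hrec]
      constructor
      · intro hyG
        by_contra hlt
        push_neg at hlt
        -- y ≥ c + 1, parity forces y ≥ c + 2
        have hcd' : (2:ℤ) ∣ ((n:ℤ)+1 - c) := by push_cast at hcd; omega
        have hy2 : c + 2 ≤ y := by omega
        have h2E : (((n+1:ℕ):ℤ), c + 2) ∈ E0 l := by
          refine ⟨by push_cast; omega, by push_cast; omega, by push_cast; omega,
            by push_cast; omega, by push_cast; omega⟩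
        have h2G : (((n+1:ℕ):ℤ), c + 2) ∈ G := ideal_col hG hyG h2E (by omega)
        have hmidE : ((n:ℤ), c + 1) ∈ E0 l := by
          refine ⟨by omega, by omega, by omega, by omega, by omega⟩
        have hstep : E0Step l ((n:ℤ), c + 1) (((n+1:ℕ):ℤ), c + 2) :=
          ⟨hmidE, h2E, by ring, Or.inl (by push_cast; ring)⟩
        have hmidG : ((n:ℤ), c + 1) ∈ G :=
          hG.2 _ h2G _ hmidE (Relation.ReflTransGen.single hstep)
        have := (ih (by omega) (c+1) hmidE).1 hmidG
        omega
      · intro hlt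
        exact ideal_col hG hmem ⟨by push_cast; omega, by push_cast; omega,
          by push_cast; omega, by push_cast; omega, by push_cast; omega⟩ (by omega)
    · rw [if_neg hmem] at hrec
      rw [show (n+1)+1 = n+2 from rfl, hrec]
      constructor
      · intro hyG
        by_contra hlt
        push_neg at hlt
        -- y ≥ c - 1, parity forces y ≥ c
        have hcd' : (2:ℤ) ∣ ((n:ℤ)+1 - c) := by push_cast at hcd; omega
        have hyc : c ≤ y := by omega
        exact hmem (ideal_col hG hyG hcE (by omega))
      · intro hlt
        -- y ≤ c - 2
        have hcd' : (2:ℤ) ∣ ((n:ℤ)+1 - c) := by push_cast at hcd; omega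
        have hy2 : y ≤ c - 2 := by omega
        have hupE : ((n:ℤ), y + 1) ∈ E0 l := by
          refine ⟨by omega, by omega, by omega, by omega, by omega⟩
        have hupG : ((n:ℤ), y + 1) ∈ G := by
          refine (ih (by omega) (y+1) hupE).2 (by omega)
        have hstep : E0Step l (((n+1:ℕ):ℤ), y) ((n:ℤ), y + 1) :=
          ⟨⟨by push_cast; omega, by push_cast; omega, by push_cast; omega,
            by push_cast; omega, by push_cast; omega⟩, hupE, by ring,
            Or.inr (by push_cast; ring)⟩
        exact hG.2 _ hupG _ ⟨by push_cast; omega, by push_cast; omega, by push_cast; omega,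
          by push_cast; omega, by push_cast; omega⟩ (Relation.ReflTransGen.single hstep)

/-- The region below a lattice path. -/
def GOf (l : ℕ) (ε : ℕ → Bool) : Set (ℤ × ℤ) :=
  {p | p ∈ E0 l ∧ p.2 < fpath ε (p.1 + 1).toNat}

lemma stepClosed {l : ℕ} {ε : ℕ → Bool} {a b : ℤ × ℤ}
    (h : E0Step l a b) (hb : b ∈ GOf l ε) : a ∈ GOf l ε := by
  obtain ⟨haE, hbE, hy, hx⟩ := h
  refine ⟨haE, ?_⟩
  have hb2 := hb.2
  have ha1 : 0 ≤ a.1 := haE.1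
  have hb1 : 0 ≤ b.1 := hbE.1
  rcases hx with h1 | h1
  · have e1 : (b.1+1).toNat = (a.1+1).toNat + 1 := by omega
    rw [e1] at hb2
    rcases fpath_step ε ((a.1+1).toNat) with h' | h' <;> omega
  · have e1 : (a.1+1).toNat = (b.1+1).toNat + 1 := by omega
    rw [e1]
    rcases fpath_step ε ((b.1+1).toNat) with h' | h' <;> omega

lemma rtgClosed {l : ℕ} {ε : ℕ → Bool} {a b : ℤ × ℤ}
    (h : Relation.ReflTransGen (E0Step l) a b) : b ∈ GOf l ε → a ∈ GOf l ε := by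
  induction h with
  | refl => exact id
  | tail h1 h2 ih => exact fun hb => ih (stepClosed h2 hb)

lemma GOf_ideal (l : ℕ) (ε : ℕ → Bool) : IsIdealE0 l (GOf l ε) :=
  ⟨fun p hp => hp.1, fun b hb a _ hle => rtgClosed hle hb⟩

/-- Membership of the diagonal point of a path-region. -/
lemma mem_GOf_diag {l : ℕ} {ε : ℕ → Bool} {n : ℕ} (hn : n < l) :
    (((n:ℤ), fpath ε n) ∈ GOf l ε) ↔ ε n = true := by
  obtain ⟨h1, h2, h3⟩ := fpath_bounds ε n
  have hE : ((n:ℤ), fpath ε n) ∈ E0 l :=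
    ⟨by simp, by simp; omega, h1, h2, h3⟩
  have e1 : ((n:ℤ) + 1).toNat = n + 1 := by omega
  constructor
  · intro h
    have := h.2
    simp only [e1] at this
    by_contra hne
    simp only [Bool.not_eq_true] at hne
    simp [fpath, hne] at this
  · intro h
    refine ⟨hE, ?_⟩
    simp only [e1]
    simp [fpath, h]

lemma path_agree (l : ℕ) (ε : ℕ → Bool) : ∀ n : ℕ, n ≤ l → pathOf (GOf l ε) n = fpath ε n := by
  intro n
  induction n with
  | zero => intro _; simp [pathOf, fpath]
  | succ n ih =>
    intro hn
    have ihn := ih (by omega)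
    rw [pathOf, fpath, ihn]
    congr 1
    by_cases h : ε n
    · rw [if_pos ((mem_GOf_diag (by omega)).mpr h), if_pos h]
    · rw [if_neg, if_neg h]
      intro hc
      exact h ((mem_GOf_diag (by omega)).mp hc)

/-- Extend a `Fin l`-indexed bit sequence to `ℕ`. -/
def extB (l : ℕ) (ε : Fin l → Bool) : ℕ → Bool :=
  fun n => if h : n < l then ε ⟨n, h⟩ else true

lemma path_agree2 {l : ℕ} {G : Set (ℤ × ℤ)} :
    ∀ n : ℕ, n ≤ l → fpath (extB l (fun i : Fin l => epsOf G i)) n = pathOf G n := by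
  intro n
  induction n with
  | zero => intro _; simp [pathOf, fpath]
  | succ n ih =>
    intro hn
    have ihn := ih (by omega)
    rw [pathOf, fpath, ihn]
    congr 1
    have he : extB l (fun i : Fin l => epsOf G i) n = epsOf G n := by
      simp [extB, show n < l by omega]
    rw [he, epsOf]
    by_cases h : ((n:ℤ), pathOf G n) ∈ G <;> simp [h]

lemma GOf_recover {l : ℕ} {G : Set (ℤ × ℤ)} (hG : IsIdealE0 l G) :
    GOf l (extB l (fun i : Fin l => epsOf G i)) = G := by
  ext ⟨x, y⟩
  constructor
  · rintro ⟨hpE, hlt⟩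
    obtain ⟨hx0, hxl, hyl, hyu, hyd⟩ := hpE
    simp only at hx0 hxl hyl hyu hyd hlt
    have hxe : ((x.toNat : ℤ)) = x := by omega
    have e1 : (x + 1).toNat = x.toNat + 1 := by omega
    rw [e1, path_agree2 (x.toNat + 1) (by omega)] at hlt
    have := (key_ideal hG x.toNat (by omega) y
      (by rw [hxe]; exact ⟨hx0, hxl, hyl, hyu, hyd⟩)).2 hlt
    rwa [hxe] at this
  · intro hpG
    have hpE := hG.1 hpG
    obtain ⟨hx0, hxl, hyl, hyu, hyd⟩ := hpE
    simp only at hx0 hxl hyl hyu hyd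
    have hxe : ((x.toNat : ℤ)) = x := by omega
    refine ⟨⟨hx0, hxl, hyl, hyu, hyd⟩, ?_⟩
    have e1 : (x + 1).toNat = x.toNat + 1 := by omega
    rw [e1, path_agree2 (x.toNat + 1) (by omega)]
    exact (key_ideal hG x.toNat (by omega) y
      (by rw [hxe]; exact ⟨hx0, hxl, hyl, hyu, hyd⟩)).1 (by rwa [hxe])

open Classical in
lemma eps_recover {l : ℕ} (ε : ℕ → Bool) {i : ℕ} (hi : i < l) :
    epsOf (GOf l ε) i = ε i := by
  rw [epsOf]
  rw [path_agree l ε i (by omega)]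
  by_cases h : ε i
  · rw [if_pos ((mem_GOf_diag hi).mpr h), h]
  · rw [if_neg (fun hc => h ((mem_GOf_diag hi).mp hc))]
    simp only [Bool.not_eq_true] at h
    exact h.symm

/-- The poset `E_0` has exactly `2^l` ideals (including the
empty set and `E_0` itself). -/
theorem stmt16 (l : ℕ) (hl : 1 ≤ l) :
    {G : Set (ℤ × ℤ) | IsIdealE0 l G}.ncard = 2 ^ l := by
  classical
  have e : (Fin l → Bool) ≃ {G : Set (ℤ × ℤ) // IsIdealE0 l G} :=
    { toFun := fun ε => ⟨GOf l (extB l ε), GOf_ideal l _⟩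
      invFun := fun G => fun i => epsOf G.1 i
      left_inv := by
        intro ε
        funext i
        show epsOf (GOf l (extB l ε)) i.1 = ε i
        rw [eps_recover (extB l ε) i.2, extB]
        simp [i.2]
      right_inv := by
        rintro ⟨G, hG⟩
        exact Subtype.ext (GOf_recover hG) }
  calc {G : Set (ℤ × ℤ) | IsIdealE0 l G}.ncard
      = Nat.card {G : Set (ℤ × ℤ) // IsIdealE0 l G} := (Nat.card_coe_set_eq _).symm
    _ = Nat.card (Fin l → Bool) := Nat.card_congr e.symm
    _ = 2 ^ l := by simp [Nat.card_eq_fintype_card]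
end
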